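/- arXiv:1811.05960 — 5 statements merged into one kernel-verified Lean document; each statement's English description precedes it below -/
import Mathlib

section
/- Let α ∈ (0,1) and let μ: ℝ\{0} → [0,∞) be a symmetric function satisfying μ(w) ≤ C|w|^{-1-α} for all w ≠ 0. Then for every a ≥ 0 and t > 0, ∫_ℝ min((a+|w|)|w|/t^{1/α}, 1) μ(w) dw ≤ C' (t^{1/2} + a^α)/t, where C' depends only on α and C. -/
open MeasureTheory Real

lemma aux_rpow_subadd {x y p : ℝ} (hx : 0 ≤ x) (hy : 0 ≤ y) (hp : 0 ≤ p) (hp1 : p ≤ 1) :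
    (x + y) ^ p ≤ x ^ p + y ^ p := by
  have h := NNReal.rpow_add_le_add_rpow (⟨x, hx⟩ : NNReal) ⟨y, hy⟩ hp hp1
  have h2 := NNReal.coe_le_coe.2 h
  exact h2

lemma aux_integrable_comp_abs {f : ℝ → ℝ} (hf : IntegrableOn f (Set.Ioi 0)) :
    Integrable fun x => f |x| := by
  have int_Ioi : IntegrableOn (fun x => f |x|) (Set.Ioi 0) :=
    hf.congr_fun (fun x hx => by simp [abs_of_pos (Set.mem_Ioi.1 hx)]) measurableSet_Ioi
  have int_Iic : IntegrableOn (fun x ↦ f |x|) (Set.Iic 0) := by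
    rw [← Measure.map_neg_eq_self (volume : Measure ℝ)]
    have m : MeasurableEmbedding fun x : ℝ => -x := (Homeomorph.neg ℝ).measurableEmbedding
    rw [m.integrableOn_map_iff]
    simp_rw [Function.comp_def, abs_neg, Set.neg_preimage, Set.neg_Iic, neg_zero]
    exact Iff.mpr integrableOn_Ici_iff_integrableOn_Ioi int_Ioi
  rw [← integrableOn_univ, ← Set.Iic_union_Ioi (a := (0:ℝ))]
  exact int_Iic.union int_Ioi

theorem stmt0 (α C : ℝ) (hα : 0 < α) (hα1 : α < 1) (hC : 0 < C) :
    ∃ C' > 0, ∀ (μ : ℝ → ℝ), (∀ w, 0 ≤ μ w) → (∀ w, μ (-w) = μ w) →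
      (∀ w : ℝ, w ≠ 0 → μ w ≤ C * |w| ^ (-1 - α)) →
      ∀ a t : ℝ, 0 ≤ a → 0 < t →
        ∫ w : ℝ, min ((a + |w|) * |w| / t ^ (1/α)) 1 * μ w ≤
          C' * (t ^ (1/2 : ℝ) + a ^ α) / t := by
  have h1α : (0:ℝ) < 1 - α := by linarith
  refine ⟨2 * C * (1 / (1 - α) + 1 / α),
    by positivity, ?_⟩
  intro μ hμ0 hμsymm hμb a t ha ht
  set s := t ^ (1/α) with hs_def
  have hs : 0 < s := Real.rpow_pos_of_pos ht _
  set q := Real.sqrt s with hq_def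
  have hq : 0 < q := Real.sqrt_pos.2 hs
  have haq : 0 < a + q := by linarith
  set R := s / (a + q) with hR_def
  have hR : 0 < R := div_pos hs haq
  have hqq : q * q = s := Real.mul_self_sqrt hs.le
  have hRq : R ≤ q := by
    rw [hR_def, div_le_iff₀ haq]; nlinarith
  have hst : s ^ α = t := by
    rw [hs_def, ← Real.rpow_mul ht.le, one_div_mul_cancel hα.ne', Real.rpow_one]
  set Hfun : ℝ → ℝ := fun r =>
      C * ((a + q) / s * (if r < R then r ^ (-α) else 0)
        + (if r < R then 0 else r ^ (-1 - α))) with hH_def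
  -- pointwise bound
  have hfg : ∀ w : ℝ, min ((a + |w|) * |w| / s) 1 * μ w ≤ Hfun |w| := by
    intro w
    by_cases hw : w = 0
    · subst hw
      simp [Hfun, hR, Real.zero_rpow (by linarith : -α ≠ 0)]
    · have hwpos : 0 < |w| := abs_pos.mpr hw
      have hmin0 : 0 ≤ min ((a + |w|) * |w| / s) 1 :=
        le_min (by positivity) zero_le_one
      have h1 : min ((a + |w|) * |w| / s) 1 * μ w
          ≤ min ((a + |w|) * |w| / s) 1 * (C * |w| ^ (-1 - α)) :=
        mul_le_mul_of_nonneg_left (hμb w hw) hmin0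
      by_cases hcase : |w| < R
      · have hwq : |w| ≤ q := le_trans hcase.le hRq
        have hrpow : |w| ^ (-α) = |w| * |w| ^ (-1 - α) := by
          rw [show (-α : ℝ) = 1 + (-1 - α) by ring, Real.rpow_add hwpos, Real.rpow_one]
        calc min ((a + |w|) * |w| / s) 1 * μ w
            ≤ min ((a + |w|) * |w| / s) 1 * (C * |w| ^ (-1 - α)) := h1
          _ ≤ ((a + q) * |w| / s) * (C * |w| ^ (-1 - α)) := by
              apply mul_le_mul_of_nonneg_right _ (by positivity)
              refine le_trans (min_le_left _ _) ?_
              gcongr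
          _ = Hfun |w| := by
              simp only [hH_def, if_pos hcase, hrpow]
              ring
      · calc min ((a + |w|) * |w| / s) 1 * μ w
            ≤ min ((a + |w|) * |w| / s) 1 * (C * |w| ^ (-1 - α)) := h1
          _ ≤ 1 * (C * |w| ^ (-1 - α)) := by
              apply mul_le_mul_of_nonneg_right (min_le_right _ _) (by positivity)
          _ = Hfun |w| := by
              simp only [hH_def, if_neg hcase]
              ring
  -- integrability on the two pieces
  have int1 : IntegrableOn Hfun (Set.Ioo 0 R) := by
    have hnice : IntegrableOn (fun r : ℝ => (C * ((a + q) / s)) * r ^ (-α)) (Set.Ioo 0 R) := by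
      have := (intervalIntegral.intervalIntegrable_rpow' (a := 0) (b := R) (by linarith : (-1:ℝ) < -α)).1
      exact (this.mono_set Set.Ioo_subset_Ioc_self).const_mul _
    exact hnice.congr_fun
      (fun r hr => by simp only [hH_def, if_pos hr.2]; ring) measurableSet_Ioo
  have int2 : IntegrableOn Hfun (Set.Ici R) := by
    have hnice : IntegrableOn (fun r : ℝ => C * r ^ (-1 - α)) (Set.Ici R) :=
      (Iff.mpr integrableOn_Ici_iff_integrableOn_Ioi
        (integrableOn_Ioi_rpow_of_lt (by linarith) hR)).const_mul _
    exact hnice.congr_fun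
      (fun r hr => by simp only [hH_def, if_neg (not_lt.2 (Set.mem_Ici.1 hr))]; ring) measurableSet_Ici
  have hint : IntegrableOn Hfun (Set.Ioi 0) := by
    rw [← Set.Ioo_union_Ici_eq_Ioi hR]
    exact int1.union int2
  -- main comparison
  have key : ∫ w : ℝ, min ((a + |w|) * |w| / s) 1 * μ w
      ≤ 2 * ∫ r in Set.Ioi (0:ℝ), Hfun r := by
    rw [← integral_comp_abs (f := Hfun)]
    apply integral_mono_of_nonneg
    · exact ae_of_all _ fun w =>
        mul_nonneg (le_min (by positivity) zero_le_one) (hμ0 w)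
    · exact aux_integrable_comp_abs hint
    · exact ae_of_all _ hfg
  -- split and compute
  have hdisj : Disjoint (Set.Ioo (0:ℝ) R) (Set.Ici R) :=
    Set.disjoint_left.mpr fun x hx hx' => absurd hx.2 (not_lt.2 hx')
  have hsplit : ∫ r in Set.Ioi (0:ℝ), Hfun r
      = (∫ r in Set.Ioo (0:ℝ) R, Hfun r) + ∫ r in Set.Ici R, Hfun r := by
    rw [← setIntegral_union hdisj measurableSet_Ici int1 int2,
      Set.Ioo_union_Ici_eq_Ioi hR]
  have val1 : ∫ r in Set.Ioo (0:ℝ) R, Hfun r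
      = (C * ((a + q) / s)) * (R ^ (-α + 1) / (-α + 1)) := by
    rw [setIntegral_congr_fun measurableSet_Ioo
      (g := fun r : ℝ => (C * ((a + q) / s)) * r ^ (-α))
      (fun r hr => by simp only [hH_def, if_pos hr.2]; ring)]
    rw [MeasureTheory.integral_const_mul, ← integral_Ioc_eq_integral_Ioo,
      ← intervalIntegral.integral_of_le hR.le,
      integral_rpow (Or.inl (by linarith : (-1:ℝ) < -α)),
      Real.zero_rpow (by linarith : -α + 1 ≠ 0)]
    ring
  have val2 : ∫ r in Set.Ici R, Hfun r = C * (R ^ (-α) / α) := by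
    rw [setIntegral_congr_fun measurableSet_Ici
      (g := fun r : ℝ => C * r ^ (-1 - α))
      (fun r hr => by simp only [hH_def, if_neg (not_lt.2 (Set.mem_Ici.1 hr))]; ring)]
    rw [MeasureTheory.integral_const_mul, integral_Ici_eq_integral_Ioi,
      integral_Ioi_rpow_of_lt (by linarith) hR,
      show (-1 - α + 1 : ℝ) = -α by ring, neg_div_neg_eq]
  -- algebra
  have hRpow : R ^ (-α + 1) = R * R ^ (-α) := by
    rw [show (-α + 1 : ℝ) = 1 + -α by ring, Real.rpow_add hR, Real.rpow_one]
  have hcollapse : (a + q) / s * R = 1 := by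
    rw [hR_def]; field_simp
  have hRα : R ^ (-α) = (a + q) ^ α / t := by
    rw [hR_def, Real.div_rpow hs.le haq.le, Real.rpow_neg hs.le, Real.rpow_neg haq.le,
      ← hst]
    rw [div_eq_div_iff (by positivity) (by positivity)]
    field_simp
  have hqα : q ^ α = t ^ (1/2 : ℝ) := by
    rw [hq_def, Real.sqrt_eq_rpow, ← Real.rpow_mul hs.le, mul_comm,
      Real.rpow_mul hs.le, hst]
  calc ∫ w : ℝ, min ((a + |w|) * |w| / s) 1 * μ w
      ≤ 2 * ∫ r in Set.Ioi (0:ℝ), Hfun r := key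
    _ = 2 * ((C * ((a + q) / s)) * (R ^ (-α + 1) / (-α + 1)) + C * (R ^ (-α) / α)) := by
        rw [hsplit, val1, val2]
    _ = 2 * (C * ((a + q) / s * R) * (R ^ (-α) / (-α + 1)) + C * (R ^ (-α) / α)) := by
        rw [hRpow]; ring
    _ = 2 * (C * (R ^ (-α) / (-α + 1)) + C * (R ^ (-α) / α)) := by
        rw [hcollapse, mul_one]
    _ = (2 * C * (1 / (1 - α) + 1 / α)) * R ^ (-α) := by
        rw [show (-α + 1 : ℝ) = 1 - α by ring]
        ring
    _ = (2 * C * (1 / (1 - α) + 1 / α)) * ((a + q) ^ α / t) := by rw [hRα]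
    _ ≤ (2 * C * (1 / (1 - α) + 1 / α)) * ((t ^ (1/2 : ℝ) + a ^ α) / t) := by
        apply mul_le_mul_of_nonneg_left _ (by positivity)
        gcongr
        have := aux_rpow_subadd ha hq.le hα.le hα1.le
        rw [hqα] at this
        linarith
    _ = (2 * C * (1 / (1 - α) + 1 / α)) * (t ^ (1/2 : ℝ) + a ^ α) / t := by ring
end

section
/- Let α ∈ (0,1), ε ∈ (0,1], τ > 0 and h_t^{(ε)} as defined (t/(|x|+t^{1/α})^{1+α} for |x|<ε, c_ε t^{1+(d-1)/α} e^{-|x|} for |x|≥ε, with c_ε making h nonincreasing on [0,∞)). There exists c such that for all t ∈ (0,τ] and x, x' ∈ ℝ with |x-x'| ≤ t^{1/α} and |x-x'| ≤ ε/4, one has h_t^{(ε)}(x') ≤ c · h_t^{(ε)}(x/2). -/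
/-- The profile function `h_t^{(ε)}` from the paper. -/
noncomputable def hker (α ε τ : ℝ) (d : ℕ) (t x : ℝ) : ℝ :=
  if |x| < ε then t / ((|x| + t ^ (1/α)) ^ (1 + α))
  else (Real.exp ε / ((1 + τ ^ (1/α)) ^ (1 + α) * τ ^ (((d : ℝ) - 1)/α))) *
        t ^ (1 + ((d : ℝ) - 1)/α) * Real.exp (-|x|)

lemma hker_pos (α ε τ : ℝ) (d : ℕ) (hα : 0 < α) (hτ : 0 < τ) {t : ℝ} (ht : 0 < t) (x : ℝ) :
    0 < hker α ε τ d t x := by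
  unfold hker
  split <;> positivity

lemma hker_anti (α ε τ : ℝ) (d : ℕ) (hα : 0 < α) (hε : 0 < ε) (hε1 : ε ≤ 1)
    (hτ : 0 < τ) (hd : 2 ≤ d) {t a b : ℝ} (ht : 0 < t) (htτ : t ≤ τ) (hab : |a| ≤ |b|) :
    hker α ε τ d t b ≤ hker α ε τ d t a := by
  have hT : 0 < t ^ (1/α) := Real.rpow_pos_of_pos ht _
  have hp : (0:ℝ) < 1 + α := by linarith
  unfold hker
  by_cases hb : |b| < ε
  · rw [if_pos hb, if_pos (hab.trans_lt hb)]
    gcongr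
  · push_neg at hb
    by_cases ha2 : |a| < ε
    · rw [if_neg (not_lt.2 hb), if_pos ha2]
      have hd2 : (2:ℝ) ≤ (d:ℝ) := by exact_mod_cast hd
      set s := ((d:ℝ) - 1)/α with hs_def
      have hs : 0 ≤ s := div_nonneg (by linarith) hα.le
      set A := (1 + τ ^ (1/α)) ^ (1 + α) with hA_def
      set B := τ ^ s with hB_def
      have hA : 0 < A := by positivity
      have hB : 0 < B := Real.rpow_pos_of_pos hτ _
      have h1 : t ^ (1 + s) = t * t ^ s := by
        rw [Real.rpow_add ht, Real.rpow_one]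
      have h2 : t ^ s ≤ B := Real.rpow_le_rpow ht.le htτ hs
      have hts : 0 ≤ t ^ s := (Real.rpow_pos_of_pos ht _).le
      have h3 : |a| + t ^ (1/α) ≤ 1 + τ ^ (1/α) := by
        have : t ^ (1/α) ≤ τ ^ (1/α) := Real.rpow_le_rpow ht.le htτ (by positivity)
        linarith
      have h4 : (|a| + t ^ (1/α)) ^ (1 + α) ≤ A := by
        rw [hA_def]
        exact Real.rpow_le_rpow (by positivity) h3 hp.le
      have hexp : Real.exp ε * Real.exp (-|b|) ≤ 1 := by
        rw [← Real.exp_add]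
        calc Real.exp (ε + -|b|) ≤ Real.exp 0 := Real.exp_le_exp.2 (by linarith)
          _ = 1 := Real.exp_zero
      calc Real.exp ε / (A * B) * t ^ (1 + s) * Real.exp (-|b|)
          = (Real.exp ε * Real.exp (-|b|)) * (t * t ^ s) / (A * B) := by rw [h1]; ring
        _ ≤ 1 * (t * t ^ s) / (A * B) := by
            gcongr
        _ = t * t ^ s / (A * B) := by ring
        _ ≤ t * B / (A * B) := by gcongr
        _ = t / A := by
            field_simp
        _ ≤ t / ((|a| + t ^ (1/α)) ^ (1 + α)) := by
            gcongr
    · rw [if_neg (not_lt.2 hb), if_neg ha2]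
      have := Real.exp_le_exp.2 (neg_le_neg hab)
      gcongr

theorem stmt6 (α ε τ : ℝ) (d : ℕ) (hα : 0 < α) (hα1 : α < 1) (hε : 0 < ε) (hε1 : ε ≤ 1)
    (hτ : 0 < τ) (hd : 2 ≤ d) :
    ∃ c > 0, ∀ t ∈ Set.Ioc (0:ℝ) τ, ∀ x x' : ℝ,
      |x - x'| ≤ t ^ (1/α) → |x - x'| ≤ ε/4 →
      hker α ε τ d t x' ≤ c * hker α ε τ d t (x/2) := by
  refine ⟨4, by norm_num, ?_⟩
  rintro t ⟨ht, htτ⟩ x x' h1 h2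
  have hT : 0 < t ^ (1/α) := Real.rpow_pos_of_pos ht _
  have habs2 : |x/2| = |x|/2 := by rw [abs_div, abs_two]
  have hsub : |x| - |x'| ≤ |x - x'| := abs_sub_abs_le_abs_sub x x'
  by_cases hx : ε/2 ≤ |x|
  · have habs : |x/2| ≤ |x'| := by rw [habs2]; linarith
    have hmono := hker_anti α ε τ d hα hε hε1 hτ hd ht htτ habs
    have hpos := hker_pos α ε τ d hα hτ ht (x/2)
    linarith
  · push_neg at hx
    have hsub' : |x'| - |x| ≤ |x - x'| := by
      calc |x'| - |x| ≤ |x' - x| := abs_sub_abs_le_abs_sub x' x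
        _ = |x - x'| := abs_sub_comm x' x
    have hx' : |x'| < ε := by linarith
    have hx2 : |x/2| < ε := by rw [habs2]; linarith
    rw [hker, hker, if_pos hx', if_pos hx2]
    have hp : (0:ℝ) < 1 + α := by linarith
    set T := t ^ (1/α) with hT_def
    have hA : 0 < |x'| + T := by positivity
    have hB : 0 < |x/2| + T := by positivity
    have hBA : |x/2| + T ≤ 2 * (|x'| + T) := by
      rw [habs2]
      have : |x| ≤ |x'| + T := by linarith
      have h0 : 0 ≤ |x'| := abs_nonneg x'
      linarith
    have h24 : (2:ℝ) ^ ((1:ℝ) + α) ≤ 4 := by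
      calc (2:ℝ) ^ ((1:ℝ) + α) ≤ (2:ℝ) ^ (2:ℝ) :=
            Real.rpow_le_rpow_of_exponent_le (by norm_num) (by linarith)
        _ = 4 := by
            rw [show (2:ℝ) = ((2:ℕ):ℝ) from by norm_num, Real.rpow_natCast]
            norm_num
    have hkey : (|x/2| + T) ^ (1 + α) ≤ 4 * ((|x'| + T) ^ (1 + α)) := by
      calc (|x/2| + T) ^ (1 + α) ≤ (2 * (|x'| + T)) ^ (1 + α) :=
            Real.rpow_le_rpow hB.le hBA hp.le
        _ = (2:ℝ) ^ ((1:ℝ) + α) * (|x'| + T) ^ (1 + α) := by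
            rw [Real.mul_rpow (by norm_num) hA.le]
        _ ≤ 4 * ((|x'| + T) ^ (1 + α)) := by
            gcongr
    calc t / ((|x'| + T) ^ (1 + α)) ≤ t / ((|x/2| + T) ^ (1 + α) / 4) := by
          gcongr
          linarith
      _ = 4 * (t / ((|x/2| + T) ^ (1 + α))) := by
          rw [div_div_eq_mul_div]
          ring
end

section
/- Let α ∈ (0,1), δ ∈ (0,1], and μ: ℝ → [0,∞) satisfy μ(w) ≤ 𝒜 |w|^{-1-α} 1_{[-2δ,2δ]}(w). Suppose g: ℝ → [0,∞) satisfies |g(x+s) − g(x)| ≤ L min(|s| t^{-1/α}, 1)·M for all x,s and some constants L, M, t > 0. Then for |a| ≤ K, ∫_ℝ |g(x+aw) − g(x)| μ(w) dw ≤ C L M |a|^α / t, with C depending only on α, δ, K, 𝒜. -/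
open MeasureTheory
open Set Real

lemma my_integrable_comp_abs {f : ℝ → ℝ} (hf : IntegrableOn f (Set.Ioi 0)) :
    Integrable (fun x => f |x|) := by
  have hf' : IntegrableOn (fun x => f |x|) (Set.Ioi 0) :=
    hf.congr_fun (fun x hx => by rw [abs_of_pos hx]) measurableSet_Ioi
  have int_Iic : IntegrableOn (fun x ↦ f |x|) (Set.Iic 0) := by
    rw [← Measure.map_neg_eq_self (volume : Measure ℝ)]
    have m : MeasurableEmbedding fun x : ℝ => -x := (Homeomorph.neg ℝ).measurableEmbedding
    rw [m.integrableOn_map_iff]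
    simp_rw [Function.comp_def, abs_neg, neg_preimage, neg_Iic, neg_zero]
    exact Iff.mpr integrableOn_Ici_iff_integrableOn_Ioi hf'
  have := int_Iic.union hf'
  rwa [Set.Iic_union_Ioi, integrableOn_univ] at this


theorem stmt11 (α δ K 𝒜 : ℝ) (hα : 0 < α) (hα1 : α < 1) (hδ : 0 < δ) (hδ1 : δ ≤ 1)
    (hK : 0 < K) (h𝒜 : 0 < 𝒜) :
    ∃ C > 0, ∀ (μ g : ℝ → ℝ) (L M t : ℝ), 0 ≤ L → 0 ≤ M → 0 < t →
      (∀ w, 0 ≤ μ w) →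
      (∀ w : ℝ, μ w ≤ if |w| ≤ 2*δ then 𝒜 * |w| ^ (-1 - α) else 0) →
      (∀ x, 0 ≤ g x) →
      (∀ x s : ℝ, |g (x + s) - g x| ≤ L * min (|s| * t ^ (-(1/α))) 1 * M) →
      ∀ a : ℝ, |a| ≤ K → ∀ x : ℝ,
        ∫ w : ℝ, |g (x + a*w) - g x| * μ w ≤ C * L * M * |a| ^ α / t := by
  have h1α : (0:ℝ) < 1 - α := by linarith
  refine ⟨𝒜 * (2/(1-α) + 2/α), by positivity, ?_⟩
  intro μ g L M t hL hM ht hμ0 hμ hg0 hg a ha x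
  rcases eq_or_ne a 0 with rfl | hne
  · simp [Real.zero_rpow hα.ne']
  have ha0 : (0:ℝ) < |a| := abs_pos.2 hne
  have htα : (0:ℝ) < t ^ (1/α) := rpow_pos_of_pos ht _
  obtain ⟨r, hrdef⟩ : ∃ r : ℝ, r = t ^ (1/α) / |a| := ⟨_, rfl⟩
  have hr : 0 < r := hrdef ▸ div_pos htα ha0
  obtain ⟨G, hG⟩ : ∃ G : ℝ → ℝ,
      G = fun y => 𝒜*L*M * (if y ≤ r then y ^ (-α) / r else y ^ (-1-α)) := ⟨_, rfl⟩
  -- integrability of G on Ioi 0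
  have hint1 : IntegrableOn G (Ioc 0 r) := by
    have h1 : IntegrableOn (fun y : ℝ => y ^ (-α)) (Ioc 0 r) :=
      (intervalIntegral.intervalIntegrable_rpow' (by linarith : (-1:ℝ) < -α)).1
    refine IntegrableOn.congr_fun ((h1.const_mul (𝒜*L*M)).div_const r)
      (fun y hy => ?_) measurableSet_Ioc
    rw [hG]
    simp only [if_pos hy.2]
    ring
  have hint2 : IntegrableOn G (Ioi r) := by
    refine IntegrableOn.congr_fun
      ((integrableOn_Ioi_rpow_of_lt (by linarith : (-1-α) < -1) hr).const_mul (𝒜*L*M))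
      (fun y hy => ?_) measurableSet_Ioi
    rw [hG]
    simp only [if_neg (not_le.2 (mem_Ioi.1 hy))]
  have hGint : IntegrableOn G (Ioi 0) := by
    rw [← Ioc_union_Ioi_eq_Ioi hr.le]
    exact hint1.union hint2
  have hψint : Integrable (fun w : ℝ => G |w|) := my_integrable_comp_abs hGint
  -- B computation
  have hB : r ^ (-α) = |a| ^ α / t := by
    rw [hrdef, Real.div_rpow htα.le (abs_nonneg a), ← Real.rpow_mul ht.le,
      show (1/α)*(-α) = -1 by field_simp, Real.rpow_neg_one, Real.rpow_neg (abs_nonneg a)]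
    field_simp
  -- value of the integral
  have hval : ∫ w : ℝ, G |w| = (𝒜 * (2/(1-α) + 2/α)) * L * M * |a| ^ α / t := by
    rw [integral_comp_abs, ← Ioc_union_Ioi_eq_Ioi hr.le,
      setIntegral_union (Ioc_disjoint_Ioi le_rfl) measurableSet_Ioi hint1 hint2]
    have e1 : ∫ y in Ioc 0 r, G y = 𝒜*L*M * (r ^ (-α) / (1-α)) := by
      rw [setIntegral_congr_fun measurableSet_Ioc
        (fun y (hy : y ∈ Ioc 0 r) => show G y = 𝒜*L*M/r * y ^ (-α) by
          rw [hG]; simp only [if_pos hy.2]; ring)]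
      rw [integral_const_mul, ← intervalIntegral.integral_of_le hr.le,
        integral_rpow (Or.inl (by linarith : (-1:ℝ) < -α)),
        Real.zero_rpow (by intro h; apply hα1.ne; linarith : -α + 1 ≠ 0),
        Real.rpow_add_one hr.ne' (-α)]
      rw [show (-α+1 : ℝ) = 1-α by ring, sub_zero]
      field_simp
    have e2 : ∫ y in Ioi r, G y = 𝒜*L*M * (r ^ (-α) / α) := by
      rw [setIntegral_congr_fun measurableSet_Ioi
        (fun y (hy : y ∈ Ioi r) => show G y = 𝒜*L*M * y ^ (-1-α) by
          rw [hG]; simp only [if_neg (not_le.2 (mem_Ioi.1 hy))])]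
      rw [integral_const_mul, integral_Ioi_rpow_of_lt (by linarith : (-1-α) < -1) hr,
        show (-1-α+1) = -α by ring, neg_div_neg_eq]
    rw [e1, e2, hB]
    field_simp
  -- pointwise bound
  have hle : ∀ w : ℝ, |g (x + a*w) - g x| * μ w ≤ G |w| := by
    intro w
    have h1 := hg x (a*w)
    have h2 := hμ w
    have hmin0 : 0 ≤ min (|a*w| * t ^ (-(1/α))) 1 := le_min (by positivity) zero_le_one
    have hG0 : 0 ≤ G |w| := by
      rw [hG]; dsimp only; split <;> positivity
    have step1 : |g (x + a*w) - g x| * μ w ≤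
        (L * min (|a*w| * t ^ (-(1/α))) 1 * M) * μ w :=
      mul_le_mul_of_nonneg_right h1 (hμ0 w)
    have step2 : (L * min (|a*w| * t ^ (-(1/α))) 1 * M) * μ w ≤
        (L * min (|a*w| * t ^ (-(1/α))) 1 * M) *
          (if |w| ≤ 2*δ then 𝒜 * |w| ^ (-1 - α) else 0) :=
      mul_le_mul_of_nonneg_left h2 (by positivity)
    refine (step1.trans step2).trans ?_
    split
    · -- |w| ≤ 2δ
      have hmineq : |a*w| * t ^ (-(1/α)) = |w| / r := by
        rw [abs_mul, Real.rpow_neg ht.le, hrdef]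
        field_simp
      by_cases hw : |w| ≤ r
      · have hm : min (|a*w| * t ^ (-(1/α))) 1 ≤ |w| / r := hmineq ▸ min_le_left _ _
        have key : (L * min (|a*w| * t ^ (-(1/α))) 1 * M) * (𝒜 * |w| ^ (-1-α)) ≤
            (L * (|w|/r) * M) * (𝒜 * |w| ^ (-1-α)) :=
          mul_le_mul_of_nonneg_right (mul_le_mul_of_nonneg_right
            (mul_le_mul_of_nonneg_left hm hL) hM) (by positivity)
        have hww : |w| * |w| ^ (-1-α) = |w| ^ (-α) := by
          rw [show (-α) = 1 + (-1-α) by ring,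
            Real.rpow_add' (abs_nonneg w) (by intro h; linarith), rpow_one]
        refine key.trans (le_of_eq ?_)
        rw [hG]
        simp only [if_pos hw]
        rw [← hww]
        ring
      · have hm : min (|a*w| * t ^ (-(1/α))) 1 ≤ 1 := min_le_right _ _
        have key : (L * min (|a*w| * t ^ (-(1/α))) 1 * M) * (𝒜 * |w| ^ (-1-α)) ≤
            (L * 1 * M) * (𝒜 * |w| ^ (-1-α)) :=
          mul_le_mul_of_nonneg_right (mul_le_mul_of_nonneg_right
            (mul_le_mul_of_nonneg_left hm hL) hM) (by positivity)
        refine key.trans (le_of_eq ?_)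
        rw [hG]
        simp only [if_neg hw]
        ring
    · rw [mul_zero]; exact hG0
  calc ∫ w : ℝ, |g (x + a*w) - g x| * μ w ≤ ∫ w : ℝ, G |w| :=
        integral_mono_of_nonneg (Filter.Eventually.of_forall fun w =>
          mul_nonneg (abs_nonneg _) (hμ0 w)) hψint (Filter.Eventually.of_forall hle)
    _ = _ := hval
end

section
/- Suppose |q_n(t,x,y)| ≤ c₁ c₂ⁿ t^{n/2−1} / (n!)^{1/2} t^{-d/α} for all n, t ∈ (0,τ], x,y, and |q_n(t,x,y)| ≤ c₁ c₂ⁿ t^{n/2}/(n!)^{1/2} e^{−λ|x−y|/(n+1)} whenever |x−y| ≥ n+1. Then q(t,x,y) := ∑_{n≥0} q_n(t,x,y) converges absolutely and satisfies |q(t,x,y)| ≤ C t^{−d/α−1} e^{−c₃√|x−y|} for t ∈ (0,τ], x,y ∈ ℝ^d, where C, c₃ depend only on c₁, c₂, λ, τ, d, α. -/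
set_option maxHeartbeats 1600000 in
theorem stmt14 (d : ℕ) (τ α c₁ c₂ lam : ℝ) (hτ : 0 < τ) (hα : 0 < α) (hα1 : α < 1)
    (hc₁ : 0 < c₁) (hc₂ : 0 < c₂) (hlam : 0 < lam)
    (q : ℕ → ℝ → EuclideanSpace ℝ (Fin d) → EuclideanSpace ℝ (Fin d) → ℝ)
    (hbound1 : ∀ n : ℕ, ∀ t ∈ Set.Ioc (0:ℝ) τ, ∀ x y,
      |q n t x y| ≤ c₁ * c₂ ^ n * t ^ ((n:ℝ)/2 - 1) / (n.factorial : ℝ) ^ (1/2 : ℝ) *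
        t ^ (-(d:ℝ)/α))
    (hbound2 : ∀ n : ℕ, ∀ t ∈ Set.Ioc (0:ℝ) τ, ∀ x y, (n:ℝ) + 1 ≤ dist x y →
      |q n t x y| ≤ c₁ * c₂ ^ n * t ^ ((n:ℝ)/2) / (n.factorial : ℝ) ^ (1/2 : ℝ) *
        Real.exp (-lam * dist x y / ((n:ℝ) + 1))) :
    ∃ C > 0, ∃ c₃ > 0, ∀ t ∈ Set.Ioc (0:ℝ) τ, ∀ x y,
      Summable (fun n : ℕ => |q n t x y|) ∧
      |∑' n : ℕ, q n t x y| ≤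
        C * t ^ (-(d:ℝ)/α - 1) * Real.exp (-c₃ * Real.sqrt (dist x y)) := by
  obtain ⟨τ', hττ', hτ'1⟩ : ∃ τ', τ ≤ τ' ∧ 1 ≤ τ' := ⟨max τ 1, le_max_left _ _, le_max_right _ _⟩
  have hτ'0 : (0:ℝ) < τ' := lt_of_lt_of_le one_pos hτ'1
  set s : ℝ := τ' ^ ((1:ℝ)/2) with hs
  have hs1 : (1:ℝ) ≤ s := Real.one_le_rpow hτ'1 (by norm_num)
  have hs0 : (0:ℝ) < s := lt_of_lt_of_le one_pos hs1
  have he1 : (1:ℝ) ≤ Real.exp 1 := by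
    have := Real.add_one_le_exp (1:ℝ); linarith
  have he0 : (0:ℝ) < Real.exp 1 := Real.exp_pos 1
  set B : ℝ := Real.exp 1 * c₂ * s with hB
  have hB0 : 0 < B := by positivity
  set p : ℝ := (d:ℝ)/α + 1 with hp
  have hp0 : 0 ≤ p := by
    have : (0:ℝ) ≤ (d:ℝ)/α := by positivity
    simp only [hp]; linarith
  set K : ℝ := c₁ * Real.exp 1 * τ' ^ p with hK
  have hK0 : 0 < K := by positivity
  have hτ'p1 : (1:ℝ) ≤ τ' ^ p := Real.one_le_rpow hτ'1 hp0
  set c₃ : ℝ := min lam 1 with hc₃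
  have hc₃0 : 0 < c₃ := lt_min hlam one_pos
  have hc₃1 : c₃ ≤ 1 := min_le_right _ _
  have hc₃lam : c₃ ≤ lam := min_le_left _ _
  -- summability of the majorant
  have hg : Summable (fun n : ℕ => B ^ n / (n.factorial : ℝ) ^ (1/2 : ℝ)) := by
    apply summable_of_ratio_norm_eventually_le (r := 1/2) (by norm_num)
    filter_upwards [Filter.eventually_ge_atTop ⌈4*B^2⌉₊] with n hn
    have hfn : (0:ℝ) < (n.factorial : ℝ) ^ (1/2 : ℝ) :=
      Real.rpow_pos_of_pos (by exact_mod_cast n.factorial_pos) _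
    have hcast : ((n+1).factorial : ℝ) = ((n:ℝ)+1) * (n.factorial : ℝ) := by
      push_cast [Nat.factorial_succ]; ring
    have hsplit : ((n+1).factorial : ℝ) ^ (1/2 : ℝ)
        = ((n:ℝ)+1) ^ (1/2 : ℝ) * (n.factorial : ℝ) ^ (1/2 : ℝ) := by
      rw [hcast, Real.mul_rpow (by positivity) (by positivity)]
    have hn' : 4*B^2 ≤ (n:ℝ) + 1 := by
      have h1 : (4*B^2 : ℝ) ≤ (⌈4*B^2⌉₊ : ℝ) := Nat.le_ceil _
      have h2 : ((⌈4*B^2⌉₊ : ℕ) : ℝ) ≤ (n:ℝ) := by exact_mod_cast hn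
      linarith
    have hrat : B / ((n:ℝ)+1) ^ (1/2 : ℝ) ≤ 1/2 := by
      rw [div_le_iff₀ (by positivity)]
      have : (2*B) ≤ ((n:ℝ)+1) ^ (1/2 : ℝ) := by
        rw [← Real.sqrt_eq_rpow]
        rw [Real.le_sqrt (by positivity) (by positivity)]
        nlinarith
      linarith
    rw [Real.norm_eq_abs, Real.norm_eq_abs, abs_of_pos (by positivity),
      abs_of_pos (by positivity), hsplit, pow_succ]
    calc B ^ n * B / (((n:ℝ)+1) ^ (1/2 : ℝ) * (n.factorial : ℝ) ^ (1/2 : ℝ))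
        = (B / ((n:ℝ)+1) ^ (1/2 : ℝ)) * (B ^ n / (n.factorial : ℝ) ^ (1/2 : ℝ)) := by
          field_simp
      _ ≤ (1/2) * (B ^ n / (n.factorial : ℝ) ^ (1/2 : ℝ)) := by
          apply mul_le_mul_of_nonneg_right hrat (by positivity)
  set S : ℝ := ∑' n : ℕ, B ^ n / (n.factorial : ℝ) ^ (1/2 : ℝ) with hS
  have hS0 : 0 ≤ S := tsum_nonneg (fun n => by positivity)
  refine ⟨K * (S + 1), by positivity, c₃, hc₃0, ?_⟩
  intro t ht x y
  obtain ⟨ht0, htτ⟩ := ht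
  set r : ℝ := dist x y with hr
  have hr0 : 0 ≤ r := dist_nonneg
  set sr : ℝ := Real.sqrt r with hsr
  have hsr0 : 0 ≤ sr := Real.sqrt_nonneg r
  set E : ℝ := Real.exp (-c₃ * sr) with hE
  have hE0 : 0 < E := Real.exp_pos _
  set e : ℝ := -(d:ℝ)/α - 1 with he
  have hte0 : 0 < t ^ e := Real.rpow_pos_of_pos ht0 _
  -- 1 ≤ τ'^p * t^e
  have hone : (1:ℝ) ≤ τ' ^ p * t ^ e := by
    have h1 : τ' ^ (-p) ≤ t ^ (-p) :=
      Real.rpow_le_rpow_of_nonpos ht0 (htτ.trans hττ') (by linarith)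
    have h2 : t ^ (-p) = t ^ e := by
      congr 1; simp only [hp, he]; ring
    have h3 : τ' ^ p * τ' ^ (-p) = 1 := by
      rw [← Real.rpow_add hτ'0]; simp
    calc (1:ℝ) = τ' ^ p * τ' ^ (-p) := h3.symm
      _ ≤ τ' ^ p * t ^ e := by
          rw [← h2]
          exact mul_le_mul_of_nonneg_left h1 (by positivity)
  -- t^(n/2) ≤ s^n
  have hts : ∀ n : ℕ, t ^ ((n:ℝ)/2) ≤ s ^ n := by
    intro n
    have h1 : t ^ ((n:ℝ)/2) ≤ τ' ^ ((n:ℝ)/2) :=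
      Real.rpow_le_rpow ht0.le (htτ.trans hττ') (by positivity)
    have h2 : τ' ^ ((n:ℝ)/2) = s ^ n := by
      rw [← Real.rpow_natCast s n, hs, ← Real.rpow_mul hτ'0.le]
      congr 1; ring
    rw [← h2]; exact h1
  -- key pointwise bound
  have key : ∀ n : ℕ, |q n t x y| ≤
      K * (B ^ n / (n.factorial : ℝ) ^ (1/2 : ℝ)) * (t ^ e * E) := by
    intro n
    have hfn : (0:ℝ) < (n.factorial : ℝ) ^ (1/2 : ℝ) :=
      Real.rpow_pos_of_pos (by exact_mod_cast n.factorial_pos) _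
    rcases le_or_gt ((n:ℝ)+1) sr with hcase | hcase
    · -- n+1 ≤ sqrt r : use hbound2
      have hn1 : (1:ℝ) ≤ sr := le_trans (by push_cast; linarith [Nat.cast_nonneg (α := ℝ) n]) hcase
      have hrsq : sr * sr = r := Real.mul_self_sqrt hr0
      have hsrr : sr ≤ r := by nlinarith
      have hb2 := hbound2 n t ⟨ht0, htτ⟩ x y (hcase.trans hsrr)
      have hexp : Real.exp (-lam * r / ((n:ℝ)+1)) ≤ E := by
        rw [hE]
        apply Real.exp_le_exp.mpr
        have hdiv : sr ≤ r / ((n:ℝ)+1) := by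
          have : r / sr ≤ r / ((n:ℝ)+1) := by
            apply div_le_div_of_nonneg_left hr0 (by positivity) hcase
          rwa [hsr, Real.div_sqrt] at this
        have : c₃ * sr ≤ lam * (r / ((n:ℝ)+1)) :=
          mul_le_mul hc₃lam hdiv hsr0 hlam.le
        have heq : lam * (r / ((n:ℝ)+1)) = lam * r / ((n:ℝ)+1) := by ring
        rw [heq] at this
        have : -(lam * r / ((n:ℝ)+1)) ≤ -(c₃ * sr) := by linarith
        calc -lam * r / ((n:ℝ)+1) = -(lam * r / ((n:ℝ)+1)) := by ring
          _ ≤ -(c₃ * sr) := this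
          _ = -c₃ * sr := by ring
      calc |q n t x y| ≤ c₁ * c₂ ^ n * t ^ ((n:ℝ)/2) / (n.factorial : ℝ) ^ (1/2 : ℝ) *
            Real.exp (-lam * r / ((n:ℝ)+1)) := hb2
        _ ≤ c₁ * c₂ ^ n * s ^ n / (n.factorial : ℝ) ^ (1/2 : ℝ) * E := by
            apply mul_le_mul _ hexp (Real.exp_nonneg _) (by positivity)
            gcongr c₁ * c₂ ^ n * ?_ / _
            exact hts n
        _ = (c₁ * c₂ ^ n * s ^ n / (n.factorial : ℝ) ^ (1/2 : ℝ) * E) * 1 := by ring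
        _ ≤ (c₁ * c₂ ^ n * s ^ n / (n.factorial : ℝ) ^ (1/2 : ℝ) * E) *
              ((Real.exp 1 * Real.exp 1 ^ n) * (τ' ^ p * t ^ e)) := by
            have hA0 : (0:ℝ) ≤ c₁ * c₂ ^ n * s ^ n / (n.factorial : ℝ) ^ (1/2 : ℝ) * E :=
              le_of_lt (mul_pos (div_pos (mul_pos (mul_pos hc₁ (pow_pos hc₂ n))
                (pow_pos hs0 n)) hfn) hE0)
            apply mul_le_mul_of_nonneg_left _ hA0
            have h1 : (1:ℝ) ≤ Real.exp 1 * Real.exp 1 ^ n := by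
              have := one_le_pow₀ (n := n) he1
              calc (1:ℝ) = 1 * 1 := by norm_num
                _ ≤ Real.exp 1 * Real.exp 1 ^ n :=
                  mul_le_mul he1 this zero_le_one he0.le
            calc (1:ℝ) = 1 * 1 := by norm_num
              _ ≤ (Real.exp 1 * Real.exp 1 ^ n) * (τ' ^ p * t ^ e) :=
                mul_le_mul h1 hone zero_le_one (le_trans zero_le_one h1)
        _ = K * (B ^ n / (n.factorial : ℝ) ^ (1/2 : ℝ)) * (t ^ e * E) := by
            simp only [hK, hB]; ring
    · -- sqrt r < n+1 : use hbound1
      have hb1 := hbound1 n t ⟨ht0, htτ⟩ x y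
      have hrw : t ^ ((n:ℝ)/2 - 1) * t ^ (-(d:ℝ)/α)
          = t ^ ((n:ℝ)/2) * t ^ e := by
        rw [← Real.rpow_add ht0, ← Real.rpow_add ht0]
        congr 1; simp only [he]; ring
      have honeB : (1:ℝ) ≤ Real.exp 1 ^ n * Real.exp 1 * E := by
        have h1 : c₃ * sr ≤ sr := mul_le_of_le_one_left hsr0 hc₃1
        have harg : 0 ≤ (n:ℝ) + 1 + -c₃ * sr := by linarith
        calc (1:ℝ) = Real.exp 0 := Real.exp_zero.symm
          _ ≤ Real.exp ((n:ℝ) + 1 + -c₃ * sr) := Real.exp_le_exp.mpr harg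
          _ = Real.exp 1 ^ n * Real.exp 1 * E := by
              rw [hE, Real.exp_add, Real.exp_add, Real.exp_one_pow]
      calc |q n t x y| ≤ c₁ * c₂ ^ n * t ^ ((n:ℝ)/2 - 1) / (n.factorial : ℝ) ^ (1/2 : ℝ) *
            t ^ (-(d:ℝ)/α) := hb1
        _ = c₁ * c₂ ^ n * (t ^ ((n:ℝ)/2 - 1) * t ^ (-(d:ℝ)/α)) /
              (n.factorial : ℝ) ^ (1/2 : ℝ) := by ring
        _ = c₁ * c₂ ^ n * t ^ ((n:ℝ)/2) / (n.factorial : ℝ) ^ (1/2 : ℝ) * t ^ e := by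
            rw [hrw]; ring
        _ ≤ c₁ * c₂ ^ n * s ^ n / (n.factorial : ℝ) ^ (1/2 : ℝ) * t ^ e := by
            apply mul_le_mul_of_nonneg_right _ hte0.le
            gcongr c₁ * c₂ ^ n * ?_ / _
            exact hts n
        _ = (c₁ * c₂ ^ n * s ^ n / (n.factorial : ℝ) ^ (1/2 : ℝ) * t ^ e) * 1 := by ring
        _ ≤ (c₁ * c₂ ^ n * s ^ n / (n.factorial : ℝ) ^ (1/2 : ℝ) * t ^ e) *
              ((Real.exp 1 ^ n * Real.exp 1 * E) * τ' ^ p) := by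
            have hA0 : (0:ℝ) ≤ c₁ * c₂ ^ n * s ^ n / (n.factorial : ℝ) ^ (1/2 : ℝ) * t ^ e :=
              le_of_lt (mul_pos (div_pos (mul_pos (mul_pos hc₁ (pow_pos hc₂ n))
                (pow_pos hs0 n)) hfn) hte0)
            apply mul_le_mul_of_nonneg_left _ hA0
            calc (1:ℝ) = 1 * 1 := by norm_num
              _ ≤ (Real.exp 1 ^ n * Real.exp 1 * E) * τ' ^ p :=
                mul_le_mul honeB hτ'p1 zero_le_one (le_trans zero_le_one honeB)
        _ = K * (B ^ n / (n.factorial : ℝ) ^ (1/2 : ℝ)) * (t ^ e * E) := by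
            simp only [hK, hB]; ring
  -- summability of the majorant sequence
  have hM : Summable (fun n : ℕ =>
      K * (B ^ n / (n.factorial : ℝ) ^ (1/2 : ℝ)) * (t ^ e * E)) :=
    (hg.mul_left K).mul_right (t ^ e * E)
  have hsum : Summable (fun n : ℕ => |q n t x y|) :=
    Summable.of_nonneg_of_le (fun n => abs_nonneg _) key hM
  refine ⟨hsum, ?_⟩
  have h1 : |∑' n : ℕ, q n t x y| ≤ ∑' n : ℕ, |q n t x y| := by
    have := norm_tsum_le_tsum_norm (f := fun n : ℕ => q n t x y) (by simpa using hsum)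
    simpa using this
  have h2 : ∑' n : ℕ, |q n t x y| ≤
      ∑' n : ℕ, K * (B ^ n / (n.factorial : ℝ) ^ (1/2 : ℝ)) * (t ^ e * E) :=
    Summable.tsum_le_tsum key hsum hM
  have h3 : ∑' n : ℕ, K * (B ^ n / (n.factorial : ℝ) ^ (1/2 : ℝ)) * (t ^ e * E)
      = K * S * (t ^ e * E) := by
    rw [tsum_mul_right, tsum_mul_left]
  have h4 : K * S * (t ^ e * E) ≤ K * (S + 1) * t ^ e * E := by
    have h5 : K * S ≤ K * (S + 1) := by nlinarith
    have h6 := mul_le_mul_of_nonneg_right h5 (le_of_lt (mul_pos hte0 hE0))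
    have h7 : K * (S + 1) * (t ^ e * E) = K * (S + 1) * t ^ e * E := by ring
    linarith
  calc |∑' n : ℕ, q n t x y| ≤ ∑' n : ℕ, |q n t x y| := h1
    _ ≤ K * S * (t ^ e * E) := by rw [← h3]; exact h2
    _ ≤ K * (S + 1) * t ^ e * E := h4
end

section
/- Let f: ℝⁿ → ℝⁿ be Lipschitz, x ∈ ℝⁿ, and suppose every matrix M in the generalized Jacobian ∂f(y) (Clarke) at any y can be written M = M₀ + R where ‖R‖_∞ ≤ η|x−y| and |v M₀ᵀ| ≥ 2β for every unit vector v, with β, η > 0 fixed. Then f is injective on the ball B(x, β/(nη)) and f(B(x, β/(nη))) ⊇ B(f(x), β²/(2nη)). -/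
open Filter Topology

/-- The Jacobi matrix of `f` at `u` (entries of the Fréchet derivative). -/
noncomputable def jacMat {n : ℕ} (f : EuclideanSpace ℝ (Fin n) → EuclideanSpace ℝ (Fin n))
    (u : EuclideanSpace ℝ (Fin n)) : Matrix (Fin n) (Fin n) ℝ :=
  fun i j => fderiv ℝ f u (EuclideanSpace.single j 1) i

/-- Clarke's generalized Jacobian of a Lipschitz map `f` at `y`: the convex hull of
all limits of Jacobi matrices at points of differentiability approaching `y`. -/
noncomputable def genJacobian {n : ℕ}
    (f : EuclideanSpace ℝ (Fin n) → EuclideanSpace ℝ (Fin n))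
    (y : EuclideanSpace ℝ (Fin n)) : Set (Matrix (Fin n) (Fin n) ℝ) :=
  convexHull ℝ {M | ∃ u : ℕ → EuclideanSpace ℝ (Fin n),
    Tendsto u atTop (nhds y) ∧ (∀ k, DifferentiableAt ℝ f (u k)) ∧
    Tendsto (fun k => jacMat f (u k)) atTop (nhds M)}

section Aux
open MeasureTheory

lemma euclid_sum_apply {n m : ℕ} (s : Finset (Fin m)) (g : Fin m → EuclideanSpace ℝ (Fin n))
    (i : Fin n) : (∑ j ∈ s, g j) i = ∑ j ∈ s, g j i := by
  induction s using Finset.induction with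
  | empty => rfl
  | insert _ _ h ih => rw [Finset.sum_insert h, Finset.sum_insert h, ← ih]; rfl

lemma oneD(h : ℝ → ℝ) (K : NNReal) (hh : LipschitzWith K h) (c : ℝ)
    (hae : ∀ᵐ t : ℝ, t ∈ Set.Ioo (0:ℝ) 1 → DifferentiableAt ℝ h t ∧ deriv h t ≤ c) :
    h 1 - h 0 ≤ c := by
  set δ : ℕ → ℝ := fun m => 1 / (m + 1) with hδ
  have hδpos : ∀ m, 0 < δ m := fun m => by positivity
  have hδto : Tendsto δ atTop (𝓝 0) := tendsto_one_div_add_atTop_nhds_zero_nat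
  set g : ℕ → ℝ → ℝ := fun m t => (h (t + δ m) - h t) * (m + 1) with hg
  have hgbd : ∀ m t, |g m t| ≤ (K : ℝ) := by
    intro m t
    have h1 : |h (t + δ m) - h t| ≤ (K : ℝ) * δ m := by
      have := hh.dist_le_mul (t + δ m) t
      simpa [Real.dist_eq, abs_of_pos (hδpos m)] using this
    have h2 : |g m t| = |h (t + δ m) - h t| * (m + 1) := by
      rw [hg, abs_mul, abs_of_pos (by positivity : (0:ℝ) < (m:ℝ) + 1)]
    rw [h2]
    calc |h (t + δ m) - h t| * ((m:ℝ) + 1) ≤ ((K : ℝ) * δ m) * ((m:ℝ)+1) := by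
          apply mul_le_mul_of_nonneg_right h1 (by positivity)
      _ = (K : ℝ) := by rw [hδ]; field_simp
  have hgcont : ∀ m, Continuous (g m) := by
    intro m
    exact ((hh.continuous.comp (continuous_id.add continuous_const)).sub hh.continuous).mul
      continuous_const
  -- pointwise convergence at differentiability points
  have hconv : ∀ t : ℝ, DifferentiableAt ℝ h t →
      Tendsto (fun m => g m t) atTop (𝓝 (deriv h t)) := by
    intro t ht
    have hd : HasDerivAt h (deriv h t) t := ht.hasDerivAt
    rw [hasDerivAt_iff_tendsto_slope] at hd
    have hseq : Tendsto (fun m => t + δ m) atTop (𝓝[≠] t) := by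
      apply tendsto_nhdsWithin_of_tendsto_nhds_of_eventually_within
      · simpa using tendsto_const_nhds.add hδto
      · exact Eventually.of_forall fun m => by
          simp [Set.mem_compl_iff, (hδpos m).ne']
    have := hd.comp hseq
    refine this.congr fun m => ?_
    simp only [Function.comp, slope_def_field, hg]
    have h0 : t + δ m - t = δ m := by ring
    rw [h0, div_eq_iff (hδpos m).ne', hδ]
    field_simp
  -- dominated convergence on Ioo 0 1
  set μ := volume.restrict (Set.Ioo (0:ℝ) 1) with hμ
  have hμuniv : μ Set.univ = 1 := by
    rw [hμ, Measure.restrict_apply MeasurableSet.univ, Set.univ_inter, Real.volume_Ioo]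
    norm_num
  have hint : Tendsto (fun m => ∫ t, g m t ∂μ) atTop (𝓝 (∫ t, deriv h t ∂μ)) := by
    apply tendsto_integral_of_dominated_convergence (fun _ => (K:ℝ))
    · exact fun m => ((hgcont m).aestronglyMeasurable)
    · exact integrable_const _
    · intro m
      exact Eventually.of_forall fun t => by simpa [Real.norm_eq_abs] using hgbd m t
    · have h1 : ∀ᵐ t ∂μ, t ∈ Set.Ioo (0:ℝ) 1 → DifferentiableAt ℝ h t ∧ deriv h t ≤ c :=
        ae_restrict_of_ae hae
      have h2 : ∀ᵐ t ∂μ, t ∈ Set.Ioo (0:ℝ) 1 := self_mem_ae_restrict measurableSet_Ioo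
      filter_upwards [h1, h2] with t h1 h2
      exact hconv t (h1 h2).1
  -- integrability of deriv h on Ioo and bound of its integral
  have hderbd : ∀ t, |deriv h t| ≤ (K:ℝ) := by
    intro t
    by_cases ht : DifferentiableAt ℝ h t
    · have := hconv t ht
      have : Tendsto (fun m => |g m t|) atTop (𝓝 |deriv h t|) := this.abs
      exact le_of_tendsto this (Eventually.of_forall fun m => hgbd m t)
    · simp [deriv_zero_of_not_differentiableAt ht, K.coe_nonneg]
  have hder_int : Integrable (deriv h) μ := by
    refine (integrable_const (K:ℝ)).mono' ?_ ?_
    · exact (measurable_deriv h).aestronglyMeasurable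
    · exact Eventually.of_forall fun t => by simpa [Real.norm_eq_abs] using hderbd t
  have hderle : ∫ t, deriv h t ∂μ ≤ c := by
    have : ∫ t, deriv h t ∂μ ≤ ∫ _, c ∂μ := by
      apply integral_mono_ae hder_int (integrable_const _)
      have h1 : ∀ᵐ t ∂μ, t ∈ Set.Ioo (0:ℝ) 1 → DifferentiableAt ℝ h t ∧ deriv h t ≤ c :=
        ae_restrict_of_ae hae
      have h2 : ∀ᵐ t ∂μ, t ∈ Set.Ioo (0:ℝ) 1 := self_mem_ae_restrict measurableSet_Ioo
      filter_upwards [h1, h2] with t h1 h2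
      exact (h1 h2).2
    calc ∫ t, deriv h t ∂μ ≤ ∫ _, c ∂μ := this
      _ = c := by rw [integral_const, measureReal_def, hμuniv]; simp
  -- computation of ∫ g m
  have hcomp : ∀ m, ∫ t, g m t ∂μ =
      ((m:ℝ)+1) * ((∫ t in (1:ℝ)..(1 + δ m), h t) - ∫ t in (0:ℝ)..(δ m), h t) := by
    intro m
    have hi : ∀ a b : ℝ, IntervalIntegrable h volume a b :=
      fun a b => hh.continuous.intervalIntegrable a b
    have e1 : ∫ t, g m t ∂μ = ∫ t in (0:ℝ)..1, g m t := by
      rw [intervalIntegral.integral_of_le (by norm_num : (0:ℝ) ≤ 1), hμ,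
        ← integral_Ioc_eq_integral_Ioo]
    rw [e1, hg]
    simp only
    have hisub : ∫ t in (0:ℝ)..1, (h (t + δ m) - h t)
        = (∫ t in (0:ℝ)..1, h (t + δ m)) - ∫ t in (0:ℝ)..1, h t :=
      intervalIntegral.integral_sub
        ((hh.continuous.comp (continuous_id.add continuous_const)).intervalIntegrable 0 1)
        (hi 0 1)
    rw [intervalIntegral.integral_mul_const, hisub]
    have e2 : ∫ t in (0:ℝ)..1, h (t + δ m) = ∫ t in (0:ℝ)+(δ m)..(1:ℝ)+(δ m), h t :=
      (intervalIntegral.integral_comp_add_right h (δ m))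
    rw [e2]
    have e3 : ∫ t in (0:ℝ)+(δ m)..(1:ℝ)+(δ m), h t
        = (∫ t in (δ m)..(1:ℝ), h t) + ∫ t in (1:ℝ)..(1 + δ m), h t := by
      rw [zero_add, intervalIntegral.integral_add_adjacent_intervals (hi _ _) (hi _ _)]
    have e4 : ∫ t in (0:ℝ)..(1:ℝ), h t
        = (∫ t in (0:ℝ)..(δ m), h t) + ∫ t in (δ m)..(1:ℝ), h t := by
      rw [intervalIntegral.integral_add_adjacent_intervals (hi _ _) (hi _ _)]
    rw [e3, e4]
    ring
  -- the interval integral averages converge to h 1 - h 0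
  have hto : Tendsto (fun m => ∫ t, g m t ∂μ) atTop (𝓝 (h 1 - h 0)) := by
    have key : ∀ m, |(∫ t, g m t ∂μ) - (h 1 - h 0)| ≤ 2 * (K:ℝ) * δ m := by
      intro m
      have b1 : |(((m:ℝ)+1) * ∫ t in (1:ℝ)..(1 + δ m), h t) - h 1| ≤ (K:ℝ) * δ m := by
        have : ∫ t in (1:ℝ)..(1 + δ m), (h t - h 1) =
            (∫ t in (1:ℝ)..(1 + δ m), h t) - (δ m) * h 1 := by
          rw [intervalIntegral.integral_sub (hh.continuous.intervalIntegrable _ _)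
            (intervalIntegrable_const)]
          simp [intervalIntegral.integral_const]
        have hb : ‖∫ t in (1:ℝ)..(1 + δ m), (h t - h 1)‖ ≤ (K:ℝ) * δ m * |1 + δ m - 1| := by
          apply intervalIntegral.norm_integral_le_of_norm_le_const
          intro t ht
          rw [Set.uIoc_of_le (by linarith [hδpos m])] at ht
          have := hh.dist_le_mul t 1
          rw [Real.dist_eq, Real.dist_eq] at this
          have h2 : |t - 1| ≤ δ m := by
            rw [abs_le]
            constructor
            · linarith [ht.1, hδpos m]
            · linarith [ht.2]
          calc ‖h t - h 1‖ ≤ (K:ℝ) * |t - 1| := this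
            _ ≤ (K:ℝ) * δ m := by
                exact mul_le_mul_of_nonneg_left h2 (K.coe_nonneg)
        rw [this] at hb
        have habs : |1 + δ m - 1| = δ m := by
          rw [add_sub_cancel_left]; exact abs_of_pos (hδpos m)
        rw [Real.norm_eq_abs, habs] at hb
        have e : (((m:ℝ)+1) * ∫ t in (1:ℝ)..(1 + δ m), h t) - h 1
            = ((m:ℝ)+1) * ((∫ t in (1:ℝ)..(1 + δ m), h t) - (δ m) * h 1) := by
          have h1' : ((m:ℝ)+1) * (δ m) = 1 := by rw [hδ]; field_simp
          rw [mul_sub, ← mul_assoc, h1', one_mul]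
        rw [e, abs_mul, abs_of_pos (by positivity : (0:ℝ) < (m:ℝ)+1)]
        calc ((m:ℝ)+1) * |(∫ t in (1:ℝ)..(1 + δ m), h t) - (δ m) * h 1|
            ≤ ((m:ℝ)+1) * ((K:ℝ) * δ m * δ m) := by
              apply mul_le_mul_of_nonneg_left hb (by positivity)
          _ = (K:ℝ) * δ m := by rw [hδ]; field_simp
      have b2 : |(((m:ℝ)+1) * ∫ t in (0:ℝ)..(δ m), h t) - h 0| ≤ (K:ℝ) * δ m := by
        have : ∫ t in (0:ℝ)..(δ m), (h t - h 0) =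
            (∫ t in (0:ℝ)..(δ m), h t) - (δ m) * h 0 := by
          rw [intervalIntegral.integral_sub (hh.continuous.intervalIntegrable _ _)
            (intervalIntegrable_const)]
          simp [intervalIntegral.integral_const]
        have hb : ‖∫ t in (0:ℝ)..(δ m), (h t - h 0)‖ ≤ (K:ℝ) * δ m * |δ m - 0| := by
          apply intervalIntegral.norm_integral_le_of_norm_le_const
          intro t ht
          rw [Set.uIoc_of_le (le_of_lt (hδpos m))] at ht
          have := hh.dist_le_mul t 0
          rw [Real.dist_eq, Real.dist_eq] at this
          have h2 : |t - 0| ≤ δ m := by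
            rw [abs_le]
            constructor
            · linarith [ht.1, hδpos m]
            · linarith [ht.2]
          calc ‖h t - h 0‖ ≤ (K:ℝ) * |t - 0| := this
            _ ≤ (K:ℝ) * δ m := mul_le_mul_of_nonneg_left h2 (K.coe_nonneg)
        rw [this] at hb
        have habs : |δ m - 0| = δ m := by
          rw [sub_zero]; exact abs_of_pos (hδpos m)
        rw [Real.norm_eq_abs, habs] at hb
        have e : (((m:ℝ)+1) * ∫ t in (0:ℝ)..(δ m), h t) - h 0
            = ((m:ℝ)+1) * ((∫ t in (0:ℝ)..(δ m), h t) - (δ m) * h 0) := by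
          have h1' : ((m:ℝ)+1) * (δ m) = 1 := by rw [hδ]; field_simp
          rw [mul_sub, ← mul_assoc, h1', one_mul]
        rw [e, abs_mul, abs_of_pos (by positivity : (0:ℝ) < (m:ℝ)+1)]
        calc ((m:ℝ)+1) * |(∫ t in (0:ℝ)..(δ m), h t) - (δ m) * h 0|
            ≤ ((m:ℝ)+1) * ((K:ℝ) * δ m * δ m) := by
              apply mul_le_mul_of_nonneg_left hb (by positivity)
          _ = (K:ℝ) * δ m := by rw [hδ]; field_simp
      rw [hcomp m]
      have e : ((m:ℝ)+1) * ((∫ t in (1:ℝ)..(1 + δ m), h t) - ∫ t in (0:ℝ)..(δ m), h t)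
          - (h 1 - h 0)
          = ((((m:ℝ)+1) * ∫ t in (1:ℝ)..(1 + δ m), h t) - h 1)
            - ((((m:ℝ)+1) * ∫ t in (0:ℝ)..(δ m), h t) - h 0) := by ring
      rw [e]
      calc |_ - _| ≤ |(((m:ℝ)+1) * ∫ t in (1:ℝ)..(1 + δ m), h t) - h 1|
            + |(((m:ℝ)+1) * ∫ t in (0:ℝ)..(δ m), h t) - h 0| := abs_sub _ _
        _ ≤ (K:ℝ) * δ m + (K:ℝ) * δ m := add_le_add b1 b2
        _ = 2 * (K:ℝ) * δ m := by ring
    rw [Metric.tendsto_atTop]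
    intro ε hε
    rw [Metric.tendsto_atTop] at hδto
    obtain ⟨N, hN⟩ := hδto (ε / (2 * (K:ℝ) + 1)) (by positivity)
    refine ⟨N, fun m hm => ?_⟩
    have h1 := key m
    have h2 := hN m hm
    rw [Real.dist_eq, sub_zero, abs_of_pos (hδpos m)] at h2
    rw [Real.dist_eq]
    calc |(∫ t, g m t ∂μ) - (h 1 - h 0)| ≤ 2 * (K:ℝ) * δ m := h1
      _ ≤ (2 * (K:ℝ) + 1) * δ m := by nlinarith [hδpos m, K.coe_nonneg]
      _ < (2 * (K:ℝ) + 1) * (ε / (2 * (K:ℝ) + 1)) := by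
          apply mul_lt_mul_of_pos_left h2 (by positivity)
      _ = ε := by field_simp
  have := tendsto_nhds_unique hto hint
  rw [this]
  exact hderle


lemma segMVT {n : ℕ} (f : EuclideanSpace ℝ (Fin n) → EuclideanSpace ℝ (Fin n))
    (L : NNReal) (hf : LipschitzWith L f)
    (A : EuclideanSpace ℝ (Fin n) →L[ℝ] EuclideanSpace ℝ (Fin n))
    (a d : EuclideanSpace ℝ (Fin n)) (C : ℝ) (hC0 : 0 ≤ C)
    (hae : ∀ᵐ t : ℝ, t ∈ Set.Ioo (0:ℝ) 1 → DifferentiableAt ℝ f (a + t • d))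
    (hbd : ∀ t ∈ Set.Ioo (0:ℝ) 1, DifferentiableAt ℝ f (a + t • d) →
      ‖fderiv ℝ f (a + t • d) d - A d‖ ≤ C) :
    ‖f (a + d) - f a - A d‖ ≤ C := by
  set V := f (a + d) - f a - A d with hV
  rcases eq_or_ne V 0 with h0 | h0
  · rw [h0]; simpa using hC0
  set w := ‖V‖⁻¹ • V with hw
  have hVpos : 0 < ‖V‖ := norm_pos_iff.2 h0
  have hwnorm : ‖w‖ = 1 := by
    rw [hw, norm_smul, norm_inv, norm_norm, inv_mul_cancel₀ hVpos.ne']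
  set c := (inner ℝ w (A d) : ℝ) with hc
  set ψ : ℝ → ℝ := fun t => (inner ℝ w (f (a + t • d)) : ℝ) - t * c with hψ
  have hψlip : LipschitzWith (L * ‖d‖₊ + ‖A d‖₊) ψ := by
    apply LipschitzWith.of_dist_le_mul
    intro s t
    rw [Real.dist_eq, Real.dist_eq]
    have e : ψ s - ψ t = (inner ℝ w (f (a + s • d) - f (a + t • d)) : ℝ) - (s - t) * c := by
      rw [hψ]; simp only [inner_sub_right]; ring
    rw [e]
    have h1 : |(inner ℝ w (f (a + s • d) - f (a + t • d)) : ℝ)| ≤ (L : ℝ) * ‖d‖ * |s - t| := by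
      calc |(inner ℝ w (f (a + s • d) - f (a + t • d)) : ℝ)|
          ≤ ‖w‖ * ‖f (a + s • d) - f (a + t • d)‖ := abs_real_inner_le_norm _ _
        _ = ‖f (a + s • d) - f (a + t • d)‖ := by rw [hwnorm, one_mul]
        _ ≤ (L : ℝ) * ‖(a + s • d) - (a + t • d)‖ := by
            have := hf.dist_le_mul (a + s • d) (a + t • d)
            rwa [dist_eq_norm, dist_eq_norm] at this
        _ = (L : ℝ) * ‖d‖ * |s - t| := by
            rw [add_sub_add_left_eq_sub, ← sub_smul, norm_smul, Real.norm_eq_abs]; ring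
    have h2 : |(s - t) * c| ≤ ‖A d‖ * |s - t| := by
      rw [abs_mul]
      have : |c| ≤ ‖A d‖ := by
        calc |c| ≤ ‖w‖ * ‖A d‖ := abs_real_inner_le_norm _ _
          _ = ‖A d‖ := by rw [hwnorm, one_mul]
      calc |s - t| * |c| ≤ |s - t| * ‖A d‖ :=
            mul_le_mul_of_nonneg_left this (abs_nonneg _)
        _ = ‖A d‖ * |s - t| := mul_comm _ _
    calc |(inner ℝ w (f (a + s • d) - f (a + t • d)) : ℝ) - (s - t) * c|
        ≤ |(inner ℝ w (f (a + s • d) - f (a + t • d)) : ℝ)| + |(s - t) * c| := abs_sub _ _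
      _ ≤ (L : ℝ) * ‖d‖ * |s - t| + ‖A d‖ * |s - t| := add_le_add h1 h2
      _ = ((L * ‖d‖₊ + ‖A d‖₊ : NNReal) : ℝ) * |s - t| := by push_cast; ring
  have hψd : ∀ t ∈ Set.Ioo (0:ℝ) 1, DifferentiableAt ℝ f (a + t • d) →
      HasDerivAt ψ ((inner ℝ w (fderiv ℝ f (a + t • d) d) : ℝ) - c) t := by
    intro t ht hdiff
    have hline : HasDerivAt (fun s : ℝ => a + s • d) d t := by
      simpa using ((hasDerivAt_id t).smul_const d).const_add a
    have hcomp : HasDerivAt (fun s => f (a + s • d)) (fderiv ℝ f (a + t • d) d) t :=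
      (hdiff.hasFDerivAt).comp_hasDerivAt t hline
    have hinner : HasDerivAt (fun s => (inner ℝ w (f (a + s • d)) : ℝ))
        ((inner ℝ w (fderiv ℝ f (a + t • d) d) : ℝ)) t := by
      have := ((innerSL ℝ w).hasFDerivAt
        (x := f (a + t • d))).comp_hasDerivAt t hcomp
      simpa [Function.comp_def] using this
    have := hinner.sub ((hasDerivAt_id t).mul_const c)
    simp only [one_mul] at this
    exact this
  have key := oneD ψ _ hψlip C ?_
  · have e1 : ψ 1 - ψ 0 = ‖V‖ := by
      rw [hψ]
      simp only [one_smul, zero_smul, add_zero, one_mul, zero_mul, sub_zero]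
      have : f (a + d) = V + f a + A d := by rw [hV]; abel
      rw [this]
      simp only [inner_add_right]
      have : (inner ℝ w V : ℝ) = ‖V‖ := by
        rw [hw, real_inner_smul_left, real_inner_self_eq_norm_sq]
        field_simp
      rw [this]; ring
    linarith [key, e1.symm.le]
  · filter_upwards [hae] with t ht'
    intro ht
    have hdiff := ht' ht
    have hd := hψd t ht hdiff
    refine ⟨hd.differentiableAt, ?_⟩
    rw [hd.deriv]
    have : (inner ℝ w (fderiv ℝ f (a + t • d) d) : ℝ) - c
        = (inner ℝ w (fderiv ℝ f (a + t • d) d - A d) : ℝ) := by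
      rw [hc, inner_sub_right]
    rw [this]
    calc (inner ℝ w (fderiv ℝ f (a + t • d) d - A d) : ℝ)
        ≤ ‖w‖ * ‖fderiv ℝ f (a + t • d) d - A d‖ := real_inner_le_norm _ _
      _ = ‖fderiv ℝ f (a + t • d) d - A d‖ := by rw [hwnorm, one_mul]
      _ ≤ C := hbd t ht hdiff


lemma fullMVT {n : ℕ} (f : EuclideanSpace ℝ (Fin n) → EuclideanSpace ℝ (Fin n))
    (L : NNReal) (hf : LipschitzWith L f)
    (A : EuclideanSpace ℝ (Fin n) →L[ℝ] EuclideanSpace ℝ (Fin n))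
    (x : EuclideanSpace ℝ (Fin n)) (κ : ℝ) (hκ : 0 ≤ κ)
    (hbd : ∀ u, DifferentiableAt ℝ f u → ∀ d, ‖fderiv ℝ f u d - A d‖ ≤ κ * dist x u * ‖d‖)
    (a b : EuclideanSpace ℝ (Fin n)) :
    ‖f b - f a - A (b - a)‖ ≤ κ * max (dist x a) (dist x b) * ‖b - a‖ := by
  set d : EuclideanSpace ℝ (Fin n) := b - a with hd
  set D : Set (EuclideanSpace ℝ (Fin n)) := {u | DifferentiableAt ℝ f u} with hD
  have hDmeas : MeasurableSet D := measurableSet_of_differentiableAt ℝ f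
  have hDae : ∀ᵐ u : EuclideanSpace ℝ (Fin n) ∂volume, u ∈ D := hf.ae_differentiableAt
  have habel : ∀ (z : EuclideanSpace ℝ (Fin n)) (t : ℝ),
      a + z + t • d = z + (a + t • d) := fun z t => by abel
  -- Fubini: for a.e. z, the line a + z + t • d meets Dᶜ in a null set of t's
  have fub : ∀ᵐ z : EuclideanSpace ℝ (Fin n) ∂volume,
      ∀ᵐ t : ℝ ∂volume, a + z + t • d ∈ D := by
    set S' : Set (ℝ × EuclideanSpace ℝ (Fin n)) := {p | a + p.2 + p.1 • d ∈ Dᶜ} with hS'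
    have hS'meas : MeasurableSet S' := by
      have hcont : Continuous
          (fun p : ℝ × EuclideanSpace ℝ (Fin n) => a + p.2 + p.1 • d) := by fun_prop
      exact hcont.measurable hDmeas.compl
    have hS'null : (volume.prod volume) S' = 0 := by
      rw [Measure.measure_prod_null hS'meas]
      refine Eventually.of_forall fun t => ?_
      simp only [Pi.zero_apply]
      have e : Prod.mk t ⁻¹' S'
          = (fun z : EuclideanSpace ℝ (Fin n) => z + (a + t • d)) ⁻¹' Dᶜ := by
        ext z; simp only [Set.mem_preimage, hS', Set.mem_setOf_eq, habel]
      rw [e, measure_preimage_add_right]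
      have h2 := hDae
      rwa [← compl_compl D, ae_iff] at h2
    set S : Set (EuclideanSpace ℝ (Fin n) × ℝ) := Prod.swap ⁻¹' S' with hS
    have hSmeas : MeasurableSet S := measurable_swap hS'meas
    have hSnull : (volume.prod volume) S = 0 := by
      have e : ((volume : Measure (EuclideanSpace ℝ (Fin n))).prod (volume : Measure ℝ)) S
          = Measure.map Prod.swap
            (((volume : Measure (EuclideanSpace ℝ (Fin n)))).prod (volume : Measure ℝ)) S' := by
        rw [Measure.map_apply measurable_swap hS'meas]
      rw [e, Measure.prod_swap, hS'null]
    have hz' := (Measure.measure_prod_null hSmeas).1 hSnull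
    filter_upwards [hz'] with z hz
    simp only [Pi.zero_apply] at hz
    have e : Prod.mk z ⁻¹' S = {t : ℝ | a + z + t • d ∈ Dᶜ} := by
      ext t; simp [hS, hS']
    rw [e] at hz
    rw [ae_iff]
    exact hz
  -- convexity bound for distance along the segment
  have hmax : ∀ t ∈ Set.Icc (0:ℝ) 1, dist x (a + t • d) ≤ max (dist x a) (dist x b) := by
    intro t ht
    have e : x - (a + t • d) = (1 - t) • (x - a) + t • (x - b) := by
      rw [hd]; module
    rw [dist_eq_norm, e]
    calc ‖(1 - t) • (x - a) + t • (x - b)‖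
        ≤ ‖(1 - t) • (x - a)‖ + ‖t • (x - b)‖ := norm_add_le _ _
      _ = (1 - t) * ‖x - a‖ + t * ‖x - b‖ := by
          rw [norm_smul, norm_smul, Real.norm_eq_abs, Real.norm_eq_abs,
            abs_of_nonneg (by linarith [ht.2]), abs_of_nonneg ht.1]
      _ ≤ (1 - t) * max (dist x a) (dist x b) + t * max (dist x a) (dist x b) := by
          apply add_le_add
          · apply mul_le_mul_of_nonneg_left _ (by linarith [ht.2])
            rw [← dist_eq_norm]; exact le_max_left _ _
          · apply mul_le_mul_of_nonneg_left _ ht.1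
            rw [← dist_eq_norm]; exact le_max_right _ _
      _ = max (dist x a) (dist x b) := by ring
  set Cz : EuclideanSpace ℝ (Fin n) → ℝ :=
    fun z => κ * (max (dist x a) (dist x b) + ‖z‖) * ‖d‖ with hCz
  have hCz0 : ∀ z, 0 ≤ Cz z := by
    intro z
    have : (0:ℝ) ≤ max (dist x a) (dist x b) := le_max_of_le_left dist_nonneg
    positivity
  -- the estimate for good shifts z
  have est : ∀ z : EuclideanSpace ℝ (Fin n), (∀ᵐ t : ℝ ∂volume, a + z + t • d ∈ D) →
      ‖f (b + z) - f (a + z) - A d‖ ≤ Cz z := by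
    intro z hz
    have hseg := segMVT f L hf A (a + z) d (Cz z) (hCz0 z) ?_ ?_
    · have e : a + z + d = b + z := by rw [hd]; abel
      rwa [e] at hseg
    · filter_upwards [hz] with t ht _
      exact ht
    · intro t ht hdiff
      have h1 := hbd (a + z + t • d) hdiff d
      have h2 : dist x (a + z + t • d) ≤ max (dist x a) (dist x b) + ‖z‖ := by
        calc dist x (a + z + t • d) ≤ dist x (a + t • d) + dist (a + t • d) (a + z + t • d) :=
              dist_triangle _ _ _
          _ ≤ max (dist x a) (dist x b) + ‖z‖ := by
              apply add_le_add (hmax t (Set.mem_Icc_of_Ioo ht))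
              rw [dist_eq_norm]
              have : a + t • d - (a + z + t • d) = -z := by abel
              rw [this, norm_neg]
      calc ‖fderiv ℝ f (a + z + t • d) d - A d‖ ≤ κ * dist x (a + z + t • d) * ‖d‖ := h1
        _ ≤ Cz z := by
            rw [hCz]
            have hn : (0:ℝ) ≤ ‖d‖ := norm_nonneg d
            apply mul_le_mul_of_nonneg_right _ hn
            exact mul_le_mul_of_nonneg_left h2 hκ
  -- choose good shifts tending to zero
  have key : ∀ k : ℕ, ∃ z : EuclideanSpace ℝ (Fin n), ‖z‖ < 1/(k+1) ∧
      ‖f (b + z) - f (a + z) - A d‖ ≤ Cz z := by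
    intro k
    have hpos : 0 < volume (Metric.ball (0 : EuclideanSpace ℝ (Fin n)) (1/(k+1))) :=
      Metric.measure_ball_pos _ _ (by positivity)
    have hnull : volume {z : EuclideanSpace ℝ (Fin n) |
        ¬ (∀ᵐ t : ℝ ∂volume, a + z + t • d ∈ D)} = 0 := by
      rw [← ae_iff]; exact fub
    by_contra hcon
    push_neg at hcon
    have hsub : Metric.ball (0 : EuclideanSpace ℝ (Fin n)) (1/(k+1)) ⊆
        {z | ¬ (∀ᵐ t : ℝ ∂volume, a + z + t • d ∈ D)} := by
      intro z hzball
      intro hgood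
      have h1 := est z hgood
      have h2 := hcon z (by simpa [Metric.mem_ball, dist_eq_norm] using hzball)
      exact absurd h1 (not_le.2 h2)
    have hle : volume (Metric.ball (0 : EuclideanSpace ℝ (Fin n)) (1/(k+1)))
        ≤ volume {z : EuclideanSpace ℝ (Fin n) |
          ¬ (∀ᵐ t : ℝ ∂volume, a + z + t • d ∈ D)} := measure_mono hsub
    rw [hnull] at hle
    exact absurd (le_antisymm hle (by simp)) (ne_of_gt hpos)
  choose z hzsmall hzest using key
  -- pass to the limit
  have hz0 : Tendsto z atTop (𝓝 0) := by
    rw [tendsto_zero_iff_norm_tendsto_zero]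
    apply squeeze_zero (fun k => norm_nonneg _) (fun k => (hzsmall k).le)
    exact tendsto_one_div_add_atTop_nhds_zero_nat
  have hb' : Tendsto (fun k => b + z k) atTop (𝓝 b) := by
    simpa using tendsto_const_nhds.add hz0
  have ha' : Tendsto (fun k => a + z k) atTop (𝓝 a) := by
    simpa using tendsto_const_nhds.add hz0
  have T1 : Tendsto (fun k => ‖f (b + z k) - f (a + z k) - A d‖) atTop
      (𝓝 ‖f b - f a - A d‖) := by
    apply Tendsto.norm
    exact (((hf.continuous.tendsto b).comp hb').sub
      ((hf.continuous.tendsto a).comp ha')).sub tendsto_const_nhds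
  have T2 : Tendsto (fun k => Cz (z k)) atTop (𝓝 (κ * max (dist x a) (dist x b) * ‖d‖)) := by
    rw [hCz]
    have : Tendsto (fun k => ‖z k‖) atTop (𝓝 0) := by simpa using hz0.norm
    have h2 : Tendsto (fun k => max (dist x a) (dist x b) + ‖z k‖) atTop
        (𝓝 (max (dist x a) (dist x b))) := by
      simpa using tendsto_const_nhds.add this
    simpa using ((tendsto_const_nhds.mul h2).mul tendsto_const_nhds)
  exact le_of_tendsto_of_tendsto' T1 T2 hzest


section Lin
variable {n : ℕ} (M₀ : Matrix (Fin n) (Fin n) ℝ)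

noncomputable def Amap : EuclideanSpace ℝ (Fin n) →L[ℝ] EuclideanSpace ℝ (Fin n) :=
  LinearMap.toContinuousLinearMap (Matrix.toEuclideanLin M₀)

lemma Amap_apply (v : EuclideanSpace ℝ (Fin n)) (i : Fin n) :
    Amap M₀ v i = ∑ j, M₀ i j * v j := by
  simp [Amap, Matrix.toEuclideanLin_apply, Matrix.mulVec, dotProduct]

lemma norm_euclidean (v : EuclideanSpace ℝ (Fin n)) :
    ‖v‖ = Real.sqrt (∑ i, (v i)^2) := by
  rw [EuclideanSpace.norm_eq]
  congr 1
  refine Finset.sum_congr rfl fun i _ => ?_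
  rw [Real.norm_eq_abs, sq_abs]

lemma sum_sq_eq_norm (v : EuclideanSpace ℝ (Fin n)) :
    ∑ i, (v i)^2 = ‖v‖^2 := by
  rw [norm_euclidean, Real.sq_sqrt (Finset.sum_nonneg fun i _ => sq_nonneg _)]

lemma Amap_lower {β : ℝ} (hβ : (0:ℝ) < β)
    (hM₀ : ∀ v : Fin n → ℝ, (∑ i, (v i)^2) = 1 →
      2*β ≤ Real.sqrt (∑ i, (∑ j, v j * M₀ i j)^2)) (v : EuclideanSpace ℝ (Fin n)) :
    2*β*‖v‖ ≤ ‖Amap M₀ v‖ := by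
  rcases eq_or_ne v 0 with rfl | hv
  · simp
  have hvpos : 0 < ‖v‖ := norm_pos_iff.2 hv
  set w : Fin n → ℝ := fun j => ‖v‖⁻¹ * v j with hw
  have hw1 : ∑ i, (w i)^2 = 1 := by
    rw [hw]
    simp only [mul_pow, ← Finset.mul_sum]
    rw [sum_sq_eq_norm]
    field_simp
  have h := hM₀ w hw1
  have he : ∀ i, ∑ j, w j * M₀ i j = ‖v‖⁻¹ * (Amap M₀ v i) := by
    intro i
    rw [Amap_apply, Finset.mul_sum]
    refine Finset.sum_congr rfl fun j _ => ?_
    rw [hw]; ring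
  have he2 : Real.sqrt (∑ i, (∑ j, w j * M₀ i j)^2) = ‖v‖⁻¹ * ‖Amap M₀ v‖ := by
    have : ∑ i, (∑ j, w j * M₀ i j)^2 = (‖v‖⁻¹)^2 * ∑ i, (Amap M₀ v i)^2 := by
      rw [Finset.mul_sum]
      refine Finset.sum_congr rfl fun i _ => ?_
      rw [he i]; ring
    rw [this, Real.sqrt_mul (sq_nonneg _), Real.sqrt_sq (by positivity),
      ← norm_euclidean]
  rw [he2] at h
  calc 2*β*‖v‖ ≤ (‖v‖⁻¹ * ‖Amap M₀ v‖) * ‖v‖ := by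
        apply mul_le_mul_of_nonneg_right h hvpos.le
    _ = ‖Amap M₀ v‖ := by field_simp
end Lin


section Inv
variable {n : ℕ} {M₀ : Matrix (Fin n) (Fin n) ℝ} {β : ℝ}

lemma exists_inverse (hβ : 0 < β)
    (hlow : ∀ v : EuclideanSpace ℝ (Fin n), 2*β*‖v‖ ≤ ‖Amap M₀ v‖) :
    ∃ B : EuclideanSpace ℝ (Fin n) →L[ℝ] EuclideanSpace ℝ (Fin n),
      (∀ u, Amap M₀ (B u) = u) ∧ (∀ w, B (Amap M₀ w) = w) ∧
      (∀ u, ‖B u‖ ≤ (2*β)⁻¹ * ‖u‖) := by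
  have hinj : Function.Injective (Matrix.toEuclideanLin M₀) := by
    rw [injective_iff_map_eq_zero]
    intro v hv
    have := hlow v
    rw [show Amap M₀ v = Matrix.toEuclideanLin M₀ v from rfl, hv] at this
    simp only [norm_zero] at this
    have : ‖v‖ ≤ 0 := by nlinarith [norm_nonneg v]
    exact norm_le_zero_iff.1 this
  have hsurj : Function.Surjective (Matrix.toEuclideanLin M₀) :=
    (LinearMap.injective_iff_surjective).1 hinj
  set e := LinearEquiv.ofBijective (Matrix.toEuclideanLin M₀) ⟨hinj, hsurj⟩ with he
  refine ⟨LinearMap.toContinuousLinearMap (e.symm : _ →ₗ[ℝ] _), fun u => ?_, fun w => ?_,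
    fun u => ?_⟩
  · show Matrix.toEuclideanLin M₀ (e.symm u) = u
    exact e.apply_symm_apply u
  · show e.symm (Matrix.toEuclideanLin M₀ w) = w
    exact e.symm_apply_apply w
  · have h1 : Amap M₀ (LinearMap.toContinuousLinearMap (e.symm : _ →ₗ[ℝ] _) u) = u :=
      e.apply_symm_apply u
    have h2 := hlow (LinearMap.toContinuousLinearMap (e.symm : _ →ₗ[ℝ] _) u)
    rw [h1] at h2
    rw [inv_mul_eq_div, le_div_iff₀ (by positivity)]
    linarith
end Inv


lemma fderiv_bound {n : ℕ} (f : EuclideanSpace ℝ (Fin n) → EuclideanSpace ℝ (Fin n))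
    (x : EuclideanSpace ℝ (Fin n)) {η : ℝ} (hη : 0 < η) (M₀ : Matrix (Fin n) (Fin n) ℝ)
    (hdecomp : ∀ y, ∀ M ∈ genJacobian f y, ∃ R, M = M₀ + R ∧
      ∀ i j, |R i j| ≤ η * dist x y)
    (u : EuclideanSpace ℝ (Fin n)) (hu : DifferentiableAt ℝ f u)
    (dv : EuclideanSpace ℝ (Fin n)) :
    ‖fderiv ℝ f u dv - Amap M₀ dv‖ ≤ ((n:ℝ)*η) * dist x u * ‖dv‖ := by
  have hmem : jacMat f u ∈ genJacobian f u :=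
    subset_convexHull ℝ _ ⟨fun _ => u, tendsto_const_nhds, fun _ => hu, tendsto_const_nhds⟩
  obtain ⟨R, hR, hRb⟩ := hdecomp u _ hmem
  set c := η * dist x u with hc
  have hc0 : 0 ≤ c := by positivity
  have hdv : dv = ∑ j, dv j • EuclideanSpace.single j (1:ℝ) := by
    ext i
    rw [euclid_sum_apply]
    simp [EuclideanSpace.single_apply]
  have hcoord : ∀ i, (fderiv ℝ f u dv - Amap M₀ dv) i = ∑ j, R i j * dv j := by
    intro i
    have h1 : fderiv ℝ f u dv i = ∑ j, dv j * jacMat f u i j := by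
      conv_lhs => rw [hdv]
      rw [map_sum, euclid_sum_apply]
      refine Finset.sum_congr rfl fun j _ => ?_
      rw [_root_.map_smul]
      rfl
    have h3 : (fderiv ℝ f u dv - Amap M₀ dv) i = fderiv ℝ f u dv i - Amap M₀ dv i := rfl
    have h4 : ∀ j, dv j * jacMat f u i j = M₀ i j * dv j + R i j * dv j := by
      intro j
      rw [hR]
      simp only [Matrix.add_apply]
      ring
    rw [h3, h1, Amap_apply, Finset.sum_congr rfl (fun j _ => h4 j), Finset.sum_add_distrib]
    ring
  set S := ∑ j : Fin n, |dv j| with hS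
  have hS0 : 0 ≤ S := Finset.sum_nonneg fun j _ => abs_nonneg _
  have hSsq : S^2 ≤ (n:ℝ) * ‖dv‖^2 := by
    have h1 : S^2 ≤ (n:ℝ) * ∑ j : Fin n, |dv j|^2 := by
      have := sq_sum_le_card_mul_sum_sq (s := (Finset.univ : Finset (Fin n)))
        (f := fun j => |dv j|)
      simpa using this
    have h2 : ∑ j : Fin n, |dv j|^2 = ‖dv‖^2 := by
      rw [← sum_sq_eq_norm]
      exact Finset.sum_congr rfl fun j _ => sq_abs _
    rwa [h2] at h1
  have hrow : ∀ i, |∑ j, R i j * dv j| ≤ c * S := by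
    intro i
    calc |∑ j, R i j * dv j| ≤ ∑ j, |R i j * dv j| := Finset.abs_sum_le_sum_abs _ _
      _ ≤ ∑ j, c * |dv j| := by
          refine Finset.sum_le_sum fun j _ => ?_
          rw [abs_mul]
          exact mul_le_mul_of_nonneg_right (hRb i j) (abs_nonneg _)
      _ = c * S := by rw [hS, Finset.mul_sum]
  have hsum : ∑ i, ((fderiv ℝ f u dv - Amap M₀ dv) i)^2 ≤ (((n:ℝ)*η) * dist x u * ‖dv‖)^2 := by
    have h1 : ∀ i, ((fderiv ℝ f u dv - Amap M₀ dv) i)^2 ≤ (c*S)^2 := by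
      intro i
      rw [hcoord i, ← sq_abs]
      apply pow_le_pow_left₀ (abs_nonneg _) (hrow i)
    calc ∑ i, ((fderiv ℝ f u dv - Amap M₀ dv) i)^2 ≤ ∑ _i : Fin n, (c*S)^2 :=
          Finset.sum_le_sum fun i _ => h1 i
      _ = (n:ℝ) * (c*S)^2 := by rw [Finset.sum_const, Finset.card_univ, Fintype.card_fin]; simp
      _ ≤ (((n:ℝ)*η) * dist x u * ‖dv‖)^2 := by
          have hn0 : (0:ℝ) ≤ (n:ℝ) := Nat.cast_nonneg n
          have hd0 : (0:ℝ) ≤ dist x u := dist_nonneg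
          have : (n:ℝ) * (c*S)^2 = (n:ℝ) * c^2 * S^2 := by ring
          rw [this, hc]
          nlinarith [sq_nonneg (η * dist x u), mul_le_mul_of_nonneg_left hSsq
            (mul_nonneg hn0 (sq_nonneg (η * dist x u)))]
  rw [norm_euclidean]
  calc Real.sqrt (∑ i, ((fderiv ℝ f u dv - Amap M₀ dv) i)^2)
      ≤ Real.sqrt ((((n:ℝ)*η) * dist x u * ‖dv‖)^2) := Real.sqrt_le_sqrt hsum
    _ = ((n:ℝ)*η) * dist x u * ‖dv‖ := Real.sqrt_sq (by positivity)


theorem stmt15 (n : ℕ) (hn : 0 < n)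
    (f : EuclideanSpace ℝ (Fin n) → EuclideanSpace ℝ (Fin n))
    (L : NNReal) (hf : LipschitzWith L f) (x : EuclideanSpace ℝ (Fin n))
    (β η : ℝ) (hβ : 0 < β) (hη : 0 < η)
    (M₀ : Matrix (Fin n) (Fin n) ℝ)
    (hM₀ : ∀ v : Fin n → ℝ, (∑ i, (v i)^2) = 1 →
      2*β ≤ Real.sqrt (∑ i, (∑ j, v j * M₀ i j)^2))
    (hdecomp : ∀ y, ∀ M ∈ genJacobian f y, ∃ R, M = M₀ + R ∧
      ∀ i j, |R i j| ≤ η * dist x y) :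
    Set.InjOn f (Metric.ball x (β/(n*η))) ∧
      Metric.ball (f x) (β^2/(2*n*η)) ⊆ f '' Metric.ball x (β/(n*η)) := by
  have hn' : (0:ℝ) < n := by exact_mod_cast hn
  set r : ℝ := β/(n*η) with hr
  have hr0 : 0 < r := by positivity
  have hlow : ∀ v : EuclideanSpace ℝ (Fin n), 2*β*‖v‖ ≤ ‖Amap M₀ v‖ :=
    Amap_lower M₀ hβ hM₀
  obtain ⟨B, hBA, hAB, hBnorm⟩ := exists_inverse hβ hlow
  have hjac := fderiv_bound f x hη M₀ hdecomp
  have mvt : ∀ a b, ‖f b - f a - Amap M₀ (b - a)‖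
      ≤ ((n:ℝ)*η) * max (dist x a) (dist x b) * ‖b - a‖ :=
    fullMVT f L hf (Amap M₀) x ((n:ℝ)*η) (by positivity) (fun u hu d => hjac u hu d)
  have hrη : ((n:ℝ)*η) * r = β := by
    rw [hr]; field_simp
  constructor
  · -- injectivity
    intro a ha b hb hab
    by_contra hne
    have hba : 0 < ‖b - a‖ := by
      rw [norm_pos_iff, sub_ne_zero]; exact fun h => hne (h.symm)
    have h1 := mvt a b
    have e : f b - f a = 0 := by rw [hab, sub_self]
    rw [e, zero_sub, norm_neg] at h1
    have h2 := hlow (b - a)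
    have hmax : max (dist x a) (dist x b) < r := by
      apply max_lt
      · rw [dist_comm]; exact Metric.mem_ball.1 ha
      · rw [dist_comm]; exact Metric.mem_ball.1 hb
    have h3 : ((n:ℝ)*η) * max (dist x a) (dist x b) * ‖b - a‖ < β * ‖b - a‖ := by
      have : ((n:ℝ)*η) * max (dist x a) (dist x b) < β := by
        calc ((n:ℝ)*η) * max (dist x a) (dist x b) < ((n:ℝ)*η) * r :=
              mul_lt_mul_of_pos_left hmax (by positivity)
          _ = β := hrη
      exact mul_lt_mul_of_pos_right this hba
    nlinarith
  · -- surjectivity onto the small ball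
    intro y hy
    have hyd : dist y (f x) < β^2/(2*n*η) := Metric.mem_ball.1 hy
    set ρ : ℝ := 2 * dist y (f x) / β with hρ
    have hρ0 : 0 ≤ ρ := by positivity
    have hρr : ρ < r := by
      rw [hρ, div_lt_iff₀ hβ]
      have e1 : r * β = β^2/(n*η) := by rw [hr]; field_simp
      have e2 : (2:ℝ) * (β^2/(2*n*η)) = β^2/(n*η) := by field_simp
      rw [e1]
      nlinarith
    have hρβ : (2*β)⁻¹ * dist y (f x) = ρ/4 := by
      rw [hρ]; field_simp; ring
    set g : EuclideanSpace ℝ (Fin n) → EuclideanSpace ℝ (Fin n) :=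
      fun u => u + B (y - f u) with hg
    have hcontr : ∀ u v : EuclideanSpace ℝ (Fin n), u ∈ Metric.closedBall x ρ →
        v ∈ Metric.closedBall x ρ → ‖g u - g v‖ ≤ (1/2) * ‖u - v‖ := by
      intro u v hu hv
      have e : g u - g v = B (f v - f u - Amap M₀ (v - u)) := by
        rw [hg]
        simp only
        have e1 : u + B (y - f u) - (v + B (y - f v))
            = (u - v) + (B (y - f u) - B (y - f v)) := by abel
        rw [e1]
        have e2 : u - v = B (Amap M₀ (u - v)) := (hAB (u - v)).symm
        rw [e2, ← map_sub, ← map_add]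
        congr 1
        have e3 : Amap M₀ (u - v) = -(Amap M₀ (v - u)) := by
          rw [← map_neg]; congr 1; abel
        rw [e3]
        abel
      rw [e]
      have hmax : max (dist x u) (dist x v) ≤ ρ := by
        apply max_le
        · rw [dist_comm]; exact Metric.mem_closedBall.1 hu
        · rw [dist_comm]; exact Metric.mem_closedBall.1 hv
      calc ‖B (f v - f u - Amap M₀ (v - u))‖
          ≤ (2*β)⁻¹ * ‖f v - f u - Amap M₀ (v - u)‖ := hBnorm _
        _ ≤ (2*β)⁻¹ * (((n:ℝ)*η) * max (dist x u) (dist x v) * ‖v - u‖) := by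
            apply mul_le_mul_of_nonneg_left (mvt u v) (by positivity)
        _ ≤ (2*β)⁻¹ * (β * ‖v - u‖) := by
            apply mul_le_mul_of_nonneg_left _ (by positivity)
            apply mul_le_mul_of_nonneg_right _ (norm_nonneg _)
            calc ((n:ℝ)*η) * max (dist x u) (dist x v) ≤ ((n:ℝ)*η) * ρ :=
                  mul_le_mul_of_nonneg_left hmax (by positivity)
              _ ≤ ((n:ℝ)*η) * r := mul_le_mul_of_nonneg_left hρr.le (by positivity)
              _ = β := hrη
        _ = (1/2) * ‖v - u‖ := by field_simp
        _ = (1/2) * ‖u - v‖ := by rw [norm_sub_rev]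
    have hgx : ‖g x - x‖ ≤ ρ/4 := by
      rw [hg]
      simp only [add_sub_cancel_left]
      calc ‖B (y - f x)‖ ≤ (2*β)⁻¹ * ‖y - f x‖ := hBnorm _
        _ = (2*β)⁻¹ * dist y (f x) := by rw [dist_eq_norm]
        _ = ρ/4 := hρβ
    have hmaps : ∀ u ∈ Metric.closedBall x ρ, g u ∈ Metric.closedBall x ρ := by
      intro u hu
      rw [Metric.mem_closedBall, dist_eq_norm]
      have hxmem : x ∈ Metric.closedBall x ρ := Metric.mem_closedBall_self hρ0
      calc ‖g u - x‖ ≤ ‖g u - g x‖ + ‖g x - x‖ := by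
            have e : g u - x = (g u - g x) + (g x - x) := by abel
            rw [e]; exact norm_add_le _ _
        _ ≤ (1/2) * ‖u - x‖ + ρ/4 := add_le_add (hcontr u x hu hxmem) hgx
        _ ≤ (1/2) * ρ + ρ/4 := by
            have : ‖u - x‖ ≤ ρ := by
              rw [← dist_eq_norm]; exact Metric.mem_closedBall.1 hu
            linarith
        _ ≤ ρ := by linarith
    -- Banach fixed point on the closed ball
    haveI : Nonempty (Metric.closedBall x ρ) := ⟨⟨x, Metric.mem_closedBall_self hρ0⟩⟩
    haveI : CompleteSpace (Metric.closedBall x ρ) :=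
      Metric.isClosed_closedBall.completeSpace_coe
    set G : Metric.closedBall x ρ → Metric.closedBall x ρ :=
      fun u => ⟨g u.1, hmaps u.1 u.2⟩ with hG
    have hGlip : LipschitzWith (1/2 : NNReal) G := by
      apply LipschitzWith.of_dist_le_mul
      intro u v
      have : dist (G u) (G v) = dist (g u.1) (g v.1) := rfl
      rw [this, dist_eq_norm, Subtype.dist_eq, dist_eq_norm]
      calc ‖g u.1 - g v.1‖ ≤ (1/2) * ‖u.1 - v.1‖ := hcontr u.1 v.1 u.2 v.2
        _ = ((1/2 : NNReal) : ℝ) * ‖u.1 - v.1‖ := by norm_num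
    have hGcontr : ContractingWith (1/2) G :=
      ⟨by rw [← NNReal.coe_lt_coe]; norm_num, hGlip⟩
    obtain ⟨u, hufix⟩ : ∃ u : Metric.closedBall x ρ, G u = u :=
      ⟨ContractingWith.fixedPoint G hGcontr, ContractingWith.fixedPoint_isFixedPt hGcontr⟩
    have hgu : g u.1 = u.1 := congrArg Subtype.val hufix
    have hB0 : B (y - f u.1) = 0 := by
      have h2 : u.1 + B (y - f u.1) = u.1 := hgu
      exact add_eq_left.mp h2
    have hfy : f u.1 = y := by
      have h1 : y - f u.1 = Amap M₀ (B (y - f u.1)) := (hBA _).symm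
      rw [hB0, map_zero] at h1
      have := sub_eq_zero.mp h1
      exact this.symm
    exact ⟨u.1, Metric.closedBall_subset_ball hρr u.2, hfy⟩
end Aux
end
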